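/- arXiv:2101.09216 — 8 statements merged into one kernel-verified Lean document; each statement's English description precedes it below -/
import Mathlib

section
/- For every z ∈ ℂ^g, the family (exp(iπ(nᵗτn + 2nᵗz)))_{n ∈ ℤ^g} is summable (the theta series converges absolutely), and the resulting Riemann theta function θ : ℂ^g → ℂ, θ(z) = Σ_{n ∈ ℤ^g} exp(iπ(nᵗτn + 2nᵗz)), is analytic (entire) on ℂ^g. -/
/-!
Write `θ(z) = ∑ₙ aₙ exp(Lₙ z)` with `aₙ = exp(iπ nᵗτn)` and the linear form `Lₙ z = 2πi nᵗz`.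
Positive definiteness of `Im τ` gives the Gaussian decay `|aₙ| ≤ exp(-πc|n|²)`, which beats
`exp(R‖Lₙ‖) ≤ exp(2πR|n|₁)` for every `R`. Under such a bound, expanding every exponential into
its Taylor series gives an absolutely convergent double series, so `θ` is the sum of a single
power series of infinite radius.
-/

open Complex BigOperators

/-- The general term of the Riemann theta series:
`exp(iπ(nᵗτn + 2nᵗz))` for `n ∈ ℤ^g`. -/
noncomputable def thetaTerm {g : ℕ} (τ : Matrix (Fin g) (Fin g) ℂ)
    (z : Fin g → ℂ) (n : Fin g → ℤ) : ℂ :=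
  Complex.exp ((Real.pi : ℂ) * Complex.I *
    ((∑ i, ∑ j, (n i : ℂ) * τ i j * (n j : ℂ)) + 2 * ∑ i, (n i : ℂ) * z i))

/-- The Riemann theta function `θ(z) = Σ_{n ∈ ℤ^g} exp(iπ(nᵗτn + 2nᵗz))`. -/
noncomputable def riemannTheta {g : ℕ} (τ : Matrix (Fin g) (Fin g) ℂ)
    (z : Fin g → ℂ) : ℂ :=
  ∑' n : Fin g → ℤ, thetaTerm τ z n

open scoped NNReal ENNReal Nat Real Matrix

section PowerSeriesTsum

variable {𝕜 E F ι : Type*} [NontriviallyNormedField 𝕜] [NormedAddCommGroup E] [NormedSpace 𝕜 E]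
  [NormedAddCommGroup F] [NormedSpace 𝕜 F] [CompleteSpace F]

theorem HasFPowerSeriesOnBall.tsum {f : ι → E → F} {p : ι → FormalMultilinearSeries 𝕜 E F}
    {x : E} {r : ℝ≥0∞} (hf : ∀ i, HasFPowerSeriesOnBall (f i) (p i) x r) (hr : 0 < r)
    (hp : ∀ ρ : ℝ≥0, 0 < ρ → (ρ : ℝ≥0∞) < r →
      Summable fun ik : ι × ℕ => ‖p ik.1 ik.2‖ * (ρ : ℝ) ^ ik.2) :
    HasFPowerSeriesOnBall (fun y => ∑' i, f i y) (fun k => ∑' i, p i k) x r := by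
  have summable_norm (ρ : ℝ≥0) (hρ : 0 < ρ) (hρr : (ρ : ℝ≥0∞) < r) (k : ℕ) :
      Summable fun i => ‖p i k‖ := by
    have hρk : (ρ : ℝ) ^ k ≠ 0 := pow_ne_zero _ (NNReal.coe_pos.mpr hρ).ne'
    refine (((hp ρ hρ hρr).comp_injective (i := fun i => (i, k)) fun _ _ h =>
      (Prod.mk.inj h).1).div_const ((ρ : ℝ) ^ k)).congr fun i => ?_
    simp [hρk]
  have summable_p (ρ : ℝ≥0) (hρ : 0 < ρ) (hρr : (ρ : ℝ≥0∞) < r) (k : ℕ) :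
      Summable fun i => p i k :=
    .of_norm (summable_norm ρ hρ hρr k)
  refine ⟨ENNReal.le_of_forall_pos_nnreal_lt fun ρ hρ hρr => ?_, hr, fun {y} hy => ?_⟩
  · refine FormalMultilinearSeries.le_radius_of_bound _
      (∑' ik : ι × ℕ, ‖p ik.1 ik.2‖ * (ρ : ℝ) ^ ik.2) fun k => ?_
    calc ‖∑' i, p i k‖ * (ρ : ℝ) ^ k ≤ (∑' i, ‖p i k‖) * (ρ : ℝ) ^ k := by
          gcongr
          exact norm_tsum_le_tsum_norm (summable_norm ρ hρ hρr k)
      _ = ∑' i, ‖p i k‖ * (ρ : ℝ) ^ k := (tsum_mul_right).symm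
      _ ≤ _ := tsum_comp_le_tsum_of_inj (hp ρ hρ hρr) (fun _ => by positivity)
          (i := fun i => (i, k)) fun _ _ h => (Prod.mk.inj h).1
  · rw [Metric.mem_eball, edist_zero_right] at hy
    obtain ⟨ρ, hyρ, hρr⟩ := ENNReal.lt_iff_exists_nnreal_btwn.mp hy
    have hρ : 0 < ρ := ENNReal.coe_pos.mp (bot_le.trans_lt hyρ)
    have hyρ' : ‖y‖ ≤ ρ := by
      rw [enorm_eq_nnnorm, ENNReal.coe_lt_coe] at hyρ
      exact hyρ.le
    have hu : Summable fun ik : ι × ℕ => p ik.1 ik.2 fun _ => y := by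
      refine .of_norm_bounded (hp ρ hρ hρr) fun ik => ?_
      simpa using (p ik.1 ik.2).le_opNorm_mul_prod_of_le fun _ => hyρ'
    have h_row (i : ι) : HasSum (fun k => p i k fun _ => y) (f i (x + y)) :=
      (hf i).hasSum (by rwa [Metric.mem_eball, edist_zero_right])
    have h_col (k : ℕ) : HasSum (fun i => p i k fun _ => y) ((∑' i, p i k) fun _ => y) :=
      ((summable_p ρ hρ hρr k).hasSum.mapL
        (ContinuousMultilinearMap.apply 𝕜 (fun _ : Fin k => E) F fun _ => y))
    rw [(hu.hasSum.prod_fiberwise h_row).tsum_eq]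
    exact ((Equiv.prodComm ℕ ι).hasSum_iff.mpr hu.hasSum).prod_fiberwise h_col

end PowerSeriesTsum

section ExpOfLinearForm

open NormedSpace (expSeries)

variable {E : Type*} [NormedAddCommGroup E] [NormedSpace ℂ E]

theorem hasFPowerSeriesOnBall_cexp_comp (L : E →L[ℂ] ℂ) :
    HasFPowerSeriesOnBall (fun y => cexp (L y))
      ((expSeries ℂ ℂ).compContinuousLinearMap L) 0 ∞ := by
  have h := NormedSpace.hasFPowerSeriesOnBall_exp_of_radius_pos (𝕂 := ℂ) (𝔸 := ℂ)
    (NormedSpace.expSeries_radius_pos ℂ ℂ)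
  rw [NormedSpace.expSeries_radius_eq_top ℂ ℂ, ← map_zero L] at h
  simpa [Function.comp_def, ← Complex.exp_eq_exp_ℂ, ENNReal.top_div_of_ne_top enorm_ne_top]
    using h.compContinuousLinearMap

theorem norm_expSeries_compContinuousLinearMap_le (L : E →L[ℂ] ℂ) (k : ℕ) :
    ‖(expSeries ℂ ℂ).compContinuousLinearMap L k‖ ≤ ‖L‖ ^ k / k ! := by
  calc ‖(expSeries ℂ ℂ k).compContinuousLinearMap fun _ => L‖
      ≤ ‖expSeries ℂ ℂ k‖ * ∏ _ : Fin k, ‖L‖ :=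
        ContinuousMultilinearMap.norm_compContinuousLinearMap_le _ _
    _ = ‖L‖ ^ k / k ! := by
        simp [expSeries, norm_smul, ContinuousMultilinearMap.norm_mkPiAlgebraFin,
          div_eq_inv_mul]

theorem norm_mul_cexp_le (c : ℂ) (L : E →L[ℂ] ℂ) (z : E) :
    ‖c * cexp (L z)‖ ≤ ‖c‖ * Real.exp (‖z‖ * ‖L‖) := by
  rw [norm_mul, norm_exp, mul_comm ‖z‖]
  gcongr
  exact (re_le_norm _).trans (L.le_opNorm z)

variable {ι : Type*} (a : ι → ℂ) (L : ι → E →L[ℂ] ℂ)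

theorem summable_mul_cexp (h : ∀ R : ℝ, Summable fun i => ‖a i‖ * Real.exp (R * ‖L i‖))
    (z : E) : Summable fun i => a i * cexp (L i z) :=
  .of_norm_bounded (h ‖z‖) fun i => norm_mul_cexp_le (a i) (L i) z

theorem hasFPowerSeriesOnBall_tsum_mul_cexp
    (h : ∀ R : ℝ, Summable fun i => ‖a i‖ * Real.exp (R * ‖L i‖)) :
    HasFPowerSeriesOnBall (fun z => ∑' i, a i * cexp (L i z))
      (fun k => ∑' i, a i • (expSeries ℂ ℂ).compContinuousLinearMap (L i) k) 0 ∞ := by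
  refine HasFPowerSeriesOnBall.tsum (fun i => ?_) ENNReal.zero_lt_top fun ρ _ _ => ?_
  · exact (hasFPowerSeriesOnBall_cexp_comp (L i)).const_smul (c := a i)
  · have bound (i : ι) (k : ℕ) :
        ‖a i • (expSeries ℂ ℂ).compContinuousLinearMap (L i) k‖ * (ρ : ℝ) ^ k ≤
          ‖a i‖ * ((ρ * ‖L i‖) ^ k / k !) :=
      calc _ = ‖a i‖ * (‖(expSeries ℂ ℂ).compContinuousLinearMap (L i) k‖ * (ρ : ℝ) ^ k) := by
            rw [norm_smul, mul_assoc]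
        _ ≤ ‖a i‖ * (‖L i‖ ^ k / k ! * (ρ : ℝ) ^ k) := by
            gcongr
            exact norm_expSeries_compContinuousLinearMap_le _ _
        _ = _ := by ring
    have fiber_sum (i : ι) :
        ∑' k : ℕ, ‖a i‖ * ((ρ * ‖L i‖) ^ k / k !) = ‖a i‖ * Real.exp (ρ * ‖L i‖) := by
      rw [tsum_mul_left, Real.exp_eq_exp_ℝ, NormedSpace.exp_eq_tsum_div]
    have majorant : Summable fun ik : ι × ℕ => ‖a ik.1‖ * ((ρ * ‖L ik.1‖) ^ ik.2 / ik.2 !) :=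
      (summable_prod_of_nonneg fun _ => by positivity).mpr
        ⟨fun i => (Real.summable_pow_div_factorial (ρ * ‖L i‖)).mul_left ‖a i‖,
          by simpa only [fiber_sum] using h ρ⟩
    exact majorant.of_nonneg_of_le (fun _ => by positivity) fun ik => bound ik.1 ik.2

theorem analyticOnNhd_tsum_mul_cexp
    (h : ∀ R : ℝ, Summable fun i => ‖a i‖ * Real.exp (R * ‖L i‖)) :
    AnalyticOnNhd ℂ (fun z => ∑' i, a i * cexp (L i z)) Set.univ := fun _ _ =>
  (hasFPowerSeriesOnBall_tsum_mul_cexp a L h).analyticAt_of_mem (by simp)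

end ExpOfLinearForm

theorem summable_fin_pi_prod_of_nonneg {α : Type*} {f : α → ℝ} (hf₀ : 0 ≤ f) (hf : Summable f) :
    ∀ g : ℕ, Summable fun n : Fin g → α => ∏ i, f (n i)
  | 0 => .of_finite
  | g + 1 => by
    rw [← (Fin.consEquiv fun _ => α).summable_iff]
    refine (hf.mul_of_nonneg (summable_fin_pi_prod_of_nonneg hf₀ hf g) hf₀
      fun _ => Finset.prod_nonneg fun _ _ => hf₀ _).congr fun n => ?_
    simp [Fin.consEquiv, Fin.prod_univ_succ]

theorem summable_exp_neg_sum_sq_add_sum_abs (g : ℕ) {c : ℝ} (hc : 0 < c) (S : ℝ) :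
    Summable fun n : Fin g → ℤ =>
      Real.exp (-π * (c * ∑ i, (n i : ℝ) ^ 2 - 2 * S * ∑ i, |(n i : ℝ)|)) := by
  have h_one_dim : Summable fun k : ℤ => Real.exp (-π * (c * (k : ℝ) ^ 2 - 2 * S * |(k : ℝ)|)) := by
    simpa using summable_pow_mul_jacobiTheta₂_term_bound S hc 0
  refine (summable_fin_pi_prod_of_nonneg (fun _ => (Real.exp_pos _).le) h_one_dim g).congr
    fun n => ?_
  rw [← Real.exp_sum, Finset.mul_sum, Finset.mul_sum, ← Finset.sum_sub_distrib, Finset.mul_sum]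

theorem exists_pos_mul_norm_sq_le {E : Type*} [NormedAddCommGroup E] [NormedSpace ℝ E]
    [FiniteDimensional ℝ E] {f : E → ℝ} (hf : Continuous f)
    (hf_smul : ∀ (t : ℝ) (x : E), f (t • x) = t ^ 2 * f x) (hf_pos : ∀ x ≠ 0, 0 < f x) :
    ∃ c > 0, ∀ x, c * ‖x‖ ^ 2 ≤ f x := by
  obtain ⟨c, hc, hc_le⟩ := (isCompact_sphere (0 : E) 1).exists_forall_le' hf.continuousOn
    fun x hx => hf_pos x (ne_zero_of_mem_unit_sphere ⟨x, hx⟩)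
  refine ⟨c, hc, fun x => ?_⟩
  rcases eq_or_ne x 0 with rfl | hx
  · simpa using (hf_smul 0 0).ge
  have hx' : 0 < ‖x‖ := norm_pos_iff.mpr hx
  calc c * ‖x‖ ^ 2 ≤ f (‖x‖⁻¹ • x) * ‖x‖ ^ 2 := by
        gcongr
        exact hc_le _ (by simp [norm_smul, hx'.ne'])
    _ = f x := by
        rw [hf_smul]
        field_simp

theorem Matrix.PosDef.exists_pos_mul_sum_sq_le {ι : Type*} [Fintype ι] {A : Matrix ι ι ℝ}
    (hA : A.PosDef) : ∃ c > 0, ∀ x : ι → ℝ, c * ∑ i, x i ^ 2 ≤ x ⬝ᵥ A *ᵥ x := by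
  obtain ⟨c, hc, hc_le⟩ := exists_pos_mul_norm_sq_le
    (E := EuclideanSpace ℝ ι) (f := fun v => v.ofLp ⬝ᵥ A *ᵥ v.ofLp) (by fun_prop)
    (fun t v => by
      simp only [WithLp.ofLp_smul, Matrix.mulVec_smul, dotProduct_smul, smul_dotProduct,
        smul_eq_mul]
      ring)
    (fun v hv => by simpa using hA.dotProduct_mulVec_pos (x := v.ofLp) (by simpa using hv))
  refine ⟨c, hc, fun x => ?_⟩
  simpa [EuclideanSpace.norm_sq_eq] using hc_le (WithLp.toLp 2 x)

section Theta

variable {g : ℕ}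

noncomputable def thetaLinearForm (n : Fin g → ℤ) : (Fin g → ℂ) →L[ℂ] ℂ :=
  (2 * π * I) • ∑ i, (n i : ℂ) • ContinuousLinearMap.proj i

theorem thetaLinearForm_apply (n : Fin g → ℤ) (z : Fin g → ℂ) :
    thetaLinearForm n z = 2 * π * I * ∑ i, (n i : ℂ) * z i := by
  simp [thetaLinearForm]

theorem norm_thetaLinearForm_le (n : Fin g → ℤ) :
    ‖thetaLinearForm n‖ ≤ 2 * π * ∑ i, |(n i : ℝ)| := by
  refine ContinuousLinearMap.opNorm_le_bound _ (by positivity) fun z => ?_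
  calc ‖thetaLinearForm n z‖ = 2 * π * ‖∑ i, (n i : ℂ) * z i‖ := by
        simp [thetaLinearForm_apply, Real.pi_pos.le]
    _ ≤ 2 * π * ∑ i, |(n i : ℝ)| * ‖z‖ := by
        gcongr
        refine (norm_sum_le _ _).trans (Finset.sum_le_sum fun i _ => ?_)
        rw [norm_mul, norm_intCast]
        gcongr
        exact norm_le_pi_norm z i
    _ = 2 * π * (∑ i, |(n i : ℝ)|) * ‖z‖ := by rw [← Finset.sum_mul]; ring

theorem thetaTerm_eq_mul_cexp (τ : Matrix (Fin g) (Fin g) ℂ) (z : Fin g → ℂ) (n : Fin g → ℤ) :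
    thetaTerm τ z n = thetaTerm τ 0 n * cexp (thetaLinearForm n z) := by
  rw [thetaTerm, thetaTerm, thetaLinearForm_apply, ← Complex.exp_add]
  congr 1
  simp only [Pi.zero_apply, mul_zero, Finset.sum_const_zero]
  ring

theorem norm_thetaTerm_zero (τ : Matrix (Fin g) (Fin g) ℂ) (n : Fin g → ℤ) :
    ‖thetaTerm τ 0 n‖ = Real.exp (-π * ((fun i => (n i : ℝ)) ⬝ᵥ
      (Matrix.of fun i j => (τ i j).im) *ᵥ fun i => (n i : ℝ))) := by
  rw [thetaTerm, norm_exp]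
  congr 1
  simp [Complex.mul_re, Complex.mul_im, dotProduct, Matrix.mulVec, Finset.mul_sum,
    mul_assoc]

theorem summable_norm_thetaTerm_zero_mul_exp {τ : Matrix (Fin g) (Fin g) ℂ}
    (him : Matrix.PosDef (Matrix.of fun i j => (τ i j).im)) (R : ℝ) :
    Summable fun n : Fin g → ℤ => ‖thetaTerm τ 0 n‖ * Real.exp (R * ‖thetaLinearForm n‖) := by
  obtain ⟨c, hc, hc_le⟩ := him.exists_pos_mul_sum_sq_le
  refine (summable_exp_neg_sum_sq_add_sum_abs g hc |R|).of_nonneg_of_le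
    (fun _ => by positivity) fun n => ?_
  rw [norm_thetaTerm_zero, ← Real.exp_add, Real.exp_le_exp]
  have h_quad := hc_le fun i => (n i : ℝ)
  have h_lin : R * ‖thetaLinearForm n‖ ≤ |R| * (2 * π * ∑ i, |(n i : ℝ)|) :=
    calc R * ‖thetaLinearForm n‖ ≤ |R| * ‖thetaLinearForm n‖ := by gcongr; exact le_abs_self R
      _ ≤ _ := by gcongr; exact norm_thetaLinearForm_le n
  have := mul_le_mul_of_nonneg_left h_quad Real.pi_pos.le
  linarith

end Theta

theorem riemannTheta_summable_and_analytic_general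
    (g : ℕ) (τ : Matrix (Fin g) (Fin g) ℂ)
    (him : Matrix.PosDef (Matrix.of fun i j => (τ i j).im)) :
    (∀ z : Fin g → ℂ, Summable (fun n : Fin g → ℤ => thetaTerm τ z n)) ∧
      AnalyticOnNhd ℂ (riemannTheta τ) Set.univ := by
  have h_dom := summable_norm_thetaTerm_zero_mul_exp him
  have h_term (z : Fin g → ℂ) : (fun n => thetaTerm τ z n) =
      fun n => thetaTerm τ 0 n * cexp (thetaLinearForm n z) :=
    funext (thetaTerm_eq_mul_cexp τ z)
  have h_theta : riemannTheta τ = fun z => ∑' n, thetaTerm τ 0 n * cexp (thetaLinearForm n z) :=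
    funext fun z => congrArg tsum (h_term z)
  exact ⟨fun z => h_term z ▸ summable_mul_cexp _ _ h_dom z,
    h_theta ▸ analyticOnNhd_tsum_mul_cexp _ _ h_dom⟩

/-- For a symmetric `g×g` matrix `τ` with positive definite imaginary part, the theta
series converges absolutely at every `z ∈ ℂ^g`, and the resulting function
`θ : ℂ^g → ℂ` is entire. -/
theorem riemannTheta_summable_and_analytic
    (g : ℕ) (hg : 1 ≤ g) (τ : Matrix (Fin g) (Fin g) ℂ)
    (hτ : τ.IsSymm)
    (him : Matrix.PosDef (Matrix.of fun i j => (τ i j).im)) :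
    (∀ z : Fin g → ℂ, Summable (fun n : Fin g → ℤ => thetaTerm τ z n)) ∧
      AnalyticOnNhd ℂ (riemannTheta τ) Set.univ :=
  riemannTheta_summable_and_analytic_general g τ him
end

section
/- Let g ≥ 1 and let (a₁,b₁), …, (a_g,b_g) be pairwise disjoint nonempty open bounded real intervals. Let q be a real polynomial of degree exactly g. Suppose that for each j = 1, …, g there is a continuous function ρ_j : [a_j, b_j] → ℝ with ρ_j(s) > 0 for all s ∈ (a_j, b_j), such that ∫_{a_j}^{b_j} q(s) ρ_j(s) ds = 0. Then q has exactly one root in each interval (a_j, b_j), each of these roots is simple, and q has no other roots in ℂ. -/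
/-!
Since `ρ_j > 0`, the vanishing of `∫_{a_j}^{b_j} q ρ_j` forces `q` to change sign, hence to vanish,
inside `(a_j, b_j)`. The intervals are disjoint, so this gives `g` distinct real roots of a
polynomial of degree `g`; they are therefore all of its roots, each simple, and `q` factors as its leading coefficient times `∏ (X - r_j)`.
-/

open Set Polynomial

theorem IsPreconnected.forall_pos_or_forall_neg {X α : Type*} [TopologicalSpace X]
    [LinearOrder α] [Zero α] [TopologicalSpace α] [OrderClosedTopology α]
    {s : Set X} (hs : IsPreconnected s) {f : X → α} (hf : ContinuousOn f s)
    (hne : ∀ x ∈ s, f x ≠ 0) : (∀ x ∈ s, 0 < f x) ∨ (∀ x ∈ s, f x < 0) := by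
  by_contra! h
  obtain ⟨⟨x, hx, hfx⟩, ⟨y, hy, hfy⟩⟩ := h
  obtain ⟨z, hz, hfz⟩ := hs.intermediate_value hx hy hf
    ⟨(hfx.lt_of_ne (hne x hx)).le, (hfy.lt_of_ne' (hne y hy)).le⟩
  exact hne z hz hfz

theorem exists_mem_Ioo_eq_zero_of_integral_mul_eq_zero {f ρ : ℝ → ℝ} {a b : ℝ} (hab : a < b)
    (hf : ContinuousOn f (Icc a b)) (hρ : ContinuousOn ρ (Icc a b))
    (hρ_pos : ∀ s ∈ Ioo a b, 0 < ρ s) (hint : ∫ s in a..b, f s * ρ s = 0) :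
    ∃ r ∈ Ioo a b, f r = 0 := by
  by_contra! hne
  have hfρ : IntervalIntegrable (fun s => f s * ρ s) MeasureTheory.volume a b :=
    (hf.mul hρ).intervalIntegrable_of_Icc hab.le
  rcases isPreconnected_Ioo.forall_pos_or_forall_neg (hf.mono Ioo_subset_Icc_self) hne
    with hpos | hneg
  · have := intervalIntegral.intervalIntegral_pos_of_pos_on hfρ
      (fun s hs => mul_pos (hpos s hs) (hρ_pos s hs)) hab
    exact this.ne' hint
  · have : 0 < ∫ s in a..b, -(f s * ρ s) :=
      intervalIntegral.intervalIntegral_pos_of_pos_on hfρ.neg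
        (fun s hs => neg_pos.2 (mul_neg_of_neg_of_pos (hneg s hs) (hρ_pos s hs))) hab
    rw [intervalIntegral.integral_neg, hint, neg_zero] at this
    exact lt_irrefl 0 this

theorem Polynomial.eq_C_leadingCoeff_mul_prod_X_sub_C {R ι : Type*} [CommRing R] [IsDomain R]
    [Fintype ι] {p : R[X]} (hdeg : p.degree = Fintype.card ι) {r : ι → R}
    (hr : Function.Injective r) (hroot : ∀ i, p.IsRoot (r i)) :
    p = C p.leadingCoeff * ∏ i, (X - C (r i)) := by
  have hp0 : p ≠ 0 := by rintro rfl; simp at hdeg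
  set s : Multiset R := Finset.univ.val.map r
  have hs_le : s ≤ p.roots := (Multiset.le_iff_subset (Finset.univ.nodup.map hr)).2 fun x hx => by
    obtain ⟨i, -, rfl⟩ := Multiset.mem_map.1 hx
    exact (mem_roots hp0).2 (hroot i)
  have hs_card : Multiset.card s = p.natDegree := by
    simp [s, natDegree_eq_of_degree_eq_some hdeg]
  have hs : s = p.roots := Multiset.eq_of_le_of_card_le hs_le (hs_card ▸ card_roots' p)
  have hcard : Multiset.card p.roots = p.natDegree := hs ▸ hs_card
  conv_lhs => rw [← C_leadingCoeff_mul_prod_multiset_X_sub_C hcard, ← hs]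
  simp only [s, Multiset.map_map, Function.comp_def]
  rfl

theorem exists_simple_root_in_each_interval_general
    (g : ℕ) (a b : Fin g → ℝ)
    (hab : ∀ j, a j < b j)
    (hdisj : ∀ j k, j ≠ k →
      Disjoint (Set.Ioo (a j) (b j)) (Set.Ioo (a k) (b k)))
    (q : Polynomial ℝ) (hdeg : q.degree = g)
    (hweight : ∀ j, ∃ ρ : ℝ → ℝ,
      ContinuousOn ρ (Set.Icc (a j) (b j)) ∧
      (∀ s ∈ Set.Ioo (a j) (b j), 0 < ρ s) ∧
      ∫ s in (a j)..(b j), q.eval s * ρ s = 0) :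
    ∃ r : Fin g → ℝ,
      (∀ j, r j ∈ Set.Ioo (a j) (b j)) ∧
      Function.Injective r ∧
      q = Polynomial.C q.leadingCoeff * ∏ j, (Polynomial.X - Polynomial.C (r j)) := by
  have hroots : ∀ j, ∃ r ∈ Ioo (a j) (b j), q.eval r = 0 := fun j => by
    obtain ⟨ρ, hρ, hρ_pos, hint⟩ := hweight j
    exact exists_mem_Ioo_eq_zero_of_integral_mul_eq_zero (hab j)
      q.continuous.continuousOn hρ hρ_pos hint
  choose r hr_mem hr_root using hroots
  have hr_inj : Function.Injective r := fun j k hjk => by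
    by_contra hne
    exact disjoint_left.1 (hdisj j k hne) (hr_mem j) (hjk ▸ hr_mem k)
  exact ⟨r, hr_mem, hr_inj,
    q.eq_C_leadingCoeff_mul_prod_X_sub_C (by simpa using hdeg) hr_inj hr_root⟩

/-- Let `(a₁,b₁), …, (a_g,b_g)` be pairwise disjoint nonempty open bounded intervals and
let `q` be a real polynomial of degree exactly `g`. If for each `j` there is a weight
`ρ_j`, continuous on `[a_j, b_j]` and positive on `(a_j, b_j)`, with
`∫_{a_j}^{b_j} q(s) ρ_j(s) ds = 0`, then `q` has exactly one root in each interval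
`(a_j, b_j)`, these roots are simple, and `q` has no other roots in `ℂ`: equivalently,
`q = leadingCoeff(q) · ∏_j (X − r_j)` with distinct real roots `r_j ∈ (a_j, b_j)`. -/
theorem exists_simple_root_in_each_interval
    (g : ℕ) (hg : 1 ≤ g) (a b : Fin g → ℝ)
    (hab : ∀ j, a j < b j)
    (hdisj : ∀ j k, j ≠ k →
      Disjoint (Set.Ioo (a j) (b j)) (Set.Ioo (a k) (b k)))
    (q : Polynomial ℝ) (hdeg : q.degree = g)
    (hweight : ∀ j, ∃ ρ : ℝ → ℝ,
      ContinuousOn ρ (Set.Icc (a j) (b j)) ∧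
      (∀ s ∈ Set.Ioo (a j) (b j), 0 < ρ s) ∧
      ∫ s in (a j)..(b j), q.eval s * ρ s = 0) :
    ∃ r : Fin g → ℝ,
      (∀ j, r j ∈ Set.Ioo (a j) (b j)) ∧
      Function.Injective r ∧
      q = Polynomial.C q.leadingCoeff * ∏ j, (Polynomial.X - Polynomial.C (r j)) :=
  exists_simple_root_in_each_interval_general g a b hab hdisj q hdeg hweight
end

section
/- Let M > 0, let h : ℝ → ℝ be continuous, and let c ∈ ℝ. Then for every r ≥ M: ∫_M^r h(√s) ds/s = (2/√r) ∫_{√M}^{√r} h(t) dt + 2 ∫_{√M}^{√r} (1/t)·[ (1/t)∫_{√M}^{t} h(t') dt' − c ] dt + c · log(r/M). -/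
/-!
Substituting `s = t²` turns the left side into `2 ∫_{√M}^{√r} h(t)/t dt`. With
`F(t) = ∫_{√M}^t h`, differentiating `F(t)/t` gives the integration by parts
`∫ h(t)/t = F(√r)/√r + ∫ F(t)/t²`; the remaining integral is
`∫ (1/t)((1/t) F(t) - c) = ∫ F(t)/t² - c log(√r/√M)`, and `log(√r/√M) = log(r/M)/2`.
-/

open intervalIntegral
open scoped Interval

theorem integral_comp_sqrt_div_self {g : ℝ → ℝ} (hg : Continuous g) {M r : ℝ}
    (hM : 0 < M) (hr : 0 < r) :
    ∫ s in M..r, g (Real.sqrt s) / s = 2 * ∫ t in Real.sqrt M..Real.sqrt r, g t / t := by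
  have hpos : ∀ x ∈ [[Real.sqrt M, Real.sqrt r]], 0 < x := fun x hx =>
    lt_of_lt_of_le (lt_min (Real.sqrt_pos.2 hM) (Real.sqrt_pos.2 hr)) hx.1
  have hcont : ContinuousOn (fun s => g (Real.sqrt s) / s)
      ((fun x : ℝ => x ^ 2) '' [[Real.sqrt M, Real.sqrt r]]) := by
    refine ((hg.comp Real.continuous_sqrt).continuousOn.div continuousOn_id ?_)
    rintro _ ⟨x, hx, rfl⟩
    exact (pow_pos (hpos x hx) 2).ne'
  have hsub := integral_comp_mul_deriv' (fun x _ => by simpa using hasDerivAt_pow 2 x)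
    (by fun_prop) hcont
  rw [Real.sq_sqrt hM.le, Real.sq_sqrt hr.le] at hsub
  rw [← hsub, ← integral_const_mul]
  refine integral_congr fun x hx => ?_
  have hx0 := hpos x hx
  simp only [Function.comp, Real.sqrt_sq hx0.le]
  field_simp

theorem integral_div_self_eq_div_add_integral_div_sq {h : ℝ → ℝ} (hh : Continuous h)
    {a b : ℝ} (h0 : (0 : ℝ) ∉ [[a, b]]) :
    ∫ t in a..b, h t / t =
      (∫ t in a..b, h t) / b + ∫ t in a..b, (∫ t' in a..t, h t') / t ^ 2 := by
  have hne : ∀ x ∈ [[a, b]], x ≠ 0 := fun x hx hx0 => h0 (hx0 ▸ hx)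
  set F : ℝ → ℝ := fun t => ∫ t' in a..t, h t'
  have hF : ∀ t, HasDerivAt F (h t) t := fun t =>
    integral_hasDerivAt_right (hh.intervalIntegrable _ _)
      (hh.stronglyMeasurableAtFilter _ _) hh.continuousAt
  have hFcont : Continuous F := continuous_iff_continuousAt.2 fun t => (hF t).continuousAt
  have hderiv : ∀ t ∈ [[a, b]], HasDerivAt (fun t => F t / t) (h t / t - F t / t ^ 2) t := by
    intro t ht
    have hquot : HasDerivAt (fun y => F y / y) ((h t * t - F t * 1) / t ^ 2) t :=
      (hF t).div (hasDerivAt_id t) (hne t ht)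
    convert hquot using 1
    field_simp [hne t ht]
  have hint₁ : IntervalIntegrable (fun t => h t / t) MeasureTheory.volume a b :=
    (hh.continuousOn.div continuousOn_id hne).intervalIntegrable
  have hint₂ : IntervalIntegrable (fun t => F t / t ^ 2) MeasureTheory.volume a b :=
    (hFcont.continuousOn.div (by fun_prop) fun x hx => pow_ne_zero 2 (hne x hx)).intervalIntegrable
  have hftc := integral_eq_sub_of_hasDerivAt hderiv (hint₁.sub hint₂)
  rw [integral_sub hint₁ hint₂] at hftc
  simp only [F, integral_same, zero_div, sub_zero] at hftc
  linarith

theorem integral_one_div_mul_sub {F : ℝ → ℝ} {a b : ℝ} (hF : ContinuousOn F [[a, b]])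
    (h0 : (0 : ℝ) ∉ [[a, b]]) (c : ℝ) :
    ∫ t in a..b, (1 / t) * ((1 / t) * F t - c) =
      (∫ t in a..b, F t / t ^ 2) - c * Real.log (b / a) := by
  have hne : ∀ x ∈ [[a, b]], x ≠ 0 := fun x hx hx0 => h0 (hx0 ▸ hx)
  have hint₁ : IntervalIntegrable (fun t => F t / t ^ 2) MeasureTheory.volume a b :=
    (hF.div (by fun_prop) fun x hx => pow_ne_zero 2 (hne x hx)).intervalIntegrable
  have hint₂ : IntervalIntegrable (fun t => c * (1 / t)) MeasureTheory.volume a b :=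
    ((continuousOn_const.div continuousOn_id hne).intervalIntegrable).const_mul c
  rw [← integral_one_div h0, ← integral_const_mul, ← integral_sub hint₁ hint₂]
  refine integral_congr fun x hx => ?_
  field_simp [hne x hx]

/-- For `M > 0`, `h : ℝ → ℝ` continuous, `c ∈ ℝ` and `r ≥ M`:
`∫_M^r h(√s) ds/s = (2/√r) ∫_{√M}^{√r} h(t) dt
  + 2 ∫_{√M}^{√r} (1/t)·[(1/t)∫_{√M}^t h − c] dt + c·log(r/M)`. -/
theorem integral_log_decomposition
    (M : ℝ) (hM : 0 < M) (h : ℝ → ℝ) (hh : Continuous h) (c : ℝ)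
    (r : ℝ) (hr : M ≤ r) :
    ∫ s in M..r, h (Real.sqrt s) / s =
      (2 / Real.sqrt r) * (∫ t in Real.sqrt M..Real.sqrt r, h t) +
        2 * (∫ t in Real.sqrt M..Real.sqrt r,
          (1 / t) * ((1 / t) * (∫ t' in Real.sqrt M..t, h t') - c)) +
        c * Real.log (r / M) := by
  have hr0 : 0 < r := hM.trans_le hr
  have h0 : (0 : ℝ) ∉ [[Real.sqrt M, Real.sqrt r]] := fun hmem =>
    (lt_min (Real.sqrt_pos.2 hM) (Real.sqrt_pos.2 hr0)).not_ge hmem.1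
  have hprim : Continuous fun t => ∫ t' in Real.sqrt M..t, h t' :=
    continuous_primitive (fun _ _ => hh.intervalIntegrable _ _) _
  have hlog : Real.log (Real.sqrt r / Real.sqrt M) = Real.log (r / M) / 2 := by
    rw [← Real.sqrt_div hr0.le, Real.log_sqrt (by positivity)]
  rw [integral_comp_sqrt_div_self hh hM hr0, integral_div_self_eq_div_add_integral_div_sq hh h0,
    integral_one_div_mul_sub hprim.continuousOn h0, hlog]
  ring
end

section
/- Let M > 0 and let h : ℝ → ℝ be continuous. Suppose the limit c := lim_{T→+∞} (1/T) ∫_{0}^{T} h(t) dt exists. Then ∫_M^r h(√s) ds/s = c · log r + o(log r) as r → +∞; that is, (∫_M^r h(√s) ds/s) / log r → c as r → +∞. -/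
/-!
Substituting `s = e^{2u}` turns `∫_M^r h(√s) ds/s` into `2 ∫_{(log M)/2}^{(log r)/2} h(e^u) du`,
so it suffices that `(1/Y) ∫_a^Y h(e^u) du → c`. The mean `m(u) = e^{-u} ∫_0^{e^u} h` tends to `c`
by hypothesis and satisfies `m' = h(e^u) - m`, hence `∫_a^Y h(e^u) du = m(Y) - m(a) + ∫_a^Y m`,
and the continuous Cesàro mean of `m` tends to `c`.
-/

open Filter Real Topology Asymptotics MeasureTheory intervalIntegral

theorem isLittleO_integral_of_tendsto_zero {E : Type*} [NormedAddCommGroup E] [NormedSpace ℝ E]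
    {φ : ℝ → E} (hφi : ∀ x y, IntervalIntegrable φ volume x y) (hφ : Tendsto φ atTop (𝓝 0))
    (a : ℝ) : (fun x => ∫ t in a..x, φ t) =o[atTop] id := by
  refine isLittleO_iff.2 fun ε hε => ?_
  obtain ⟨X, hX⟩ := eventually_atTop.1
    ((hφ.eventually (Metric.closedBall_mem_nhds 0 (half_pos hε))).and (eventually_ge_atTop 0))
  have hhead := (isLittleO_const_id_atTop (∫ t in a..X, φ t)).def (half_pos hε)
  filter_upwards [hhead, eventually_ge_atTop X] with x hhead hxX
  have htail : ‖∫ t in X..x, φ t‖ ≤ ε / 2 * ‖x‖ :=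
    calc ‖∫ t in X..x, φ t‖
        ≤ ε / 2 * |x - X| := norm_integral_le_of_norm_le_const fun t ht => by
          simpa using (hX t (Set.uIoc_of_le hxX ▸ ht).1.le).1
      _ ≤ ε / 2 * ‖x‖ := by
          have := (hX X le_rfl).2
          rw [abs_of_nonneg (sub_nonneg.2 hxX), Real.norm_of_nonneg (by linarith)]
          gcongr
          linarith
  calc ‖∫ t in a..x, φ t‖
      = ‖(∫ t in a..X, φ t) + ∫ t in X..x, φ t‖ := by
        rw [integral_add_adjacent_intervals (hφi a X) (hφi X x)]
    _ ≤ ε / 2 * ‖x‖ + ε / 2 * ‖x‖ := (norm_add_le _ _).trans (add_le_add hhead htail)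
    _ = ε * ‖id x‖ := by simp only [id_eq]; ring

theorem tendsto_integral_div_of_tendsto {f : ℝ → ℝ} (hfi : ∀ x y, IntervalIntegrable f volume x y)
    {L : ℝ} (hf : Tendsto f atTop (𝓝 L)) (a : ℝ) :
    Tendsto (fun x => (∫ t in a..x, f t) / x) atTop (𝓝 L) := by
  have hmean : Tendsto (fun x => (∫ t in a..x, f t - L) / x) atTop (𝓝 0) :=
    (isLittleO_integral_of_tendsto_zero (fun x y => (hfi x y).sub intervalIntegrable_const)
      (by simpa using hf.sub_const L) a).tendsto_div_nhds_zero
  have hlin : Tendsto (fun x : ℝ => L - L * a / x) atTop (𝓝 L) := by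
    simpa using tendsto_const_nhds.sub ((tendsto_const_nhds (x := L * a)).div_atTop tendsto_id)
  refine (zero_add L ▸ hmean.add hlin).congr' ?_
  filter_upwards [eventually_ne_atTop 0] with x hx
  rw [integral_sub (hfi a x) intervalIntegrable_const, intervalIntegral.integral_const, smul_eq_mul]
  field_simp
  ring

theorem integral_div_self_eq_integral_comp_exp (F : ℝ → ℝ) {a b : ℝ} (ha : 0 < a) (hb : 0 < b) :
    ∫ s in a..b, F s / s = ∫ v in log a..log b, F (exp v) := by
  have hsub := integral_comp_mul_deriv_of_deriv_nonneg (a := log a) (b := log b)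
    (g := fun s => F s / s) continuous_exp.continuousOn (fun x _ => hasDerivAt_exp x)
    (fun x _ => (exp_pos x).le)
  rw [exp_log ha, exp_log hb] at hsub
  rw [← hsub]
  refine integral_congr fun v _ => ?_
  simp [div_mul_cancel₀ _ (exp_pos v).ne']

noncomputable def expMean (h : ℝ → ℝ) (u : ℝ) : ℝ := (∫ t in (0 : ℝ)..exp u, h t) / exp u

section expMean

variable {h : ℝ → ℝ}

theorem hasDerivAt_expMean (hh : Continuous h) (u : ℝ) :
    HasDerivAt (expMean h) (h (exp u) - expMean h u) u := by
  have hH : HasDerivAt (fun u => ∫ t in (0 : ℝ)..exp u, h t) (h (exp u) * exp u) u :=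
    (integral_hasDerivAt_right (hh.intervalIntegrable 0 _) (hh.stronglyMeasurableAtFilter _ _)
      hh.continuousAt).comp u (hasDerivAt_exp u)
  refine (hH.div (hasDerivAt_exp u) (exp_pos u).ne').congr_deriv ?_
  rw [expMean]
  field_simp

theorem continuous_expMean (hh : Continuous h) : Continuous (expMean h) :=
  continuous_iff_continuousAt.2 fun u => (hasDerivAt_expMean hh u).continuousAt

theorem integral_comp_exp_eq (hh : Continuous h) (a b : ℝ) :
    ∫ u in a..b, h (exp u) = expMean h b - expMean h a + ∫ u in a..b, expMean h u := by
  have hftc := integral_eq_sub_of_hasDerivAt (fun u _ => hasDerivAt_expMean hh u)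
    (((hh.comp continuous_exp).sub (continuous_expMean hh)).intervalIntegrable a b)
  rw [integral_sub (f := fun u => h (exp u)) ((hh.comp continuous_exp).intervalIntegrable a b)
    ((continuous_expMean hh).intervalIntegrable a b)] at hftc
  linarith

theorem tendsto_integral_comp_exp_div (hh : Continuous h) {c : ℝ}
    (hc : Tendsto (fun T => (∫ t in (0 : ℝ)..T, h t) / T) atTop (𝓝 c)) (a : ℝ) :
    Tendsto (fun Y => (∫ u in a..Y, h (exp u)) / Y) atTop (𝓝 c) := by
  have hmean : Tendsto (expMean h) atTop (𝓝 c) := hc.comp tendsto_exp_atTop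
  have hboundary : Tendsto (fun Y => (expMean h Y - expMean h a) / Y) atTop (𝓝 0) :=
    (hmean.sub_const _).div_atTop tendsto_id
  refine (zero_add c ▸ hboundary.add
    (tendsto_integral_div_of_tendsto (continuous_expMean hh).intervalIntegrable hmean a)).congr
    fun Y => ?_
  rw [integral_comp_exp_eq hh, add_div]

end expMean

/-- If `h : ℝ → ℝ` is continuous and `(1/T)∫_0^T h(t) dt → c` as `T → +∞`, then for
any `M > 0` one has `∫_M^r h(√s) ds/s = c·log r + o(log r)` as `r → +∞`, i.e. the
quotient by `log r` tends to `c`. -/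
theorem integral_log_leading_term
    (M : ℝ) (hM : 0 < M) (h : ℝ → ℝ) (hh : Continuous h) (c : ℝ)
    (hc : Filter.Tendsto (fun T : ℝ => (1 / T) * ∫ t in (0:ℝ)..T, h t)
      Filter.atTop (nhds c)) :
    Filter.Tendsto
      (fun r : ℝ => (∫ s in M..r, h (Real.sqrt s) / s) / Real.log r)
      Filter.atTop (nhds c) := by
  have hlim := (tendsto_integral_comp_exp_div hh (by simpa only [one_div_mul_eq_div] using hc)
    (log M / 2)).comp (tendsto_log_atTop.atTop_div_const two_pos)
  refine hlim.congr' ?_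
  filter_upwards [eventually_gt_atTop 0] with r hr
  have hsubst : ∫ s in M..r, h (√s) / s = 2 * ∫ u in log M / 2..log r / 2, h (exp u) := by
    rw [integral_div_self_eq_integral_comp_exp _ hM hr, ← smul_eq_mul,
      ← integral_comp_div _ two_ne_zero]
    simp only [exp_half]
  simp only [Function.comp_apply, hsubst]
  ring
end

section
/- Let g ≥ 1 and let Ω ∈ ℝ^g have the good Diophantine property with constants δ₁, δ₂ > 0. Let ℓ : ℤ^g → ℂ satisfy |ℓ_m| ≤ c₁ e^{−c₂‖m‖} for all m ∈ ℤ^g, for some constants c₁, c₂ > 0, and define h(t) = Σ_{m ∈ ℤ^g} ℓ_m e^{−i(mᵗΩ)t} (the series converges absolutely for every t ∈ ℝ) and Ĥ = Σ_{m ∈ ℤ^g, mᵗΩ = 0} ℓ_m. Then for every a ∈ ℝ there exist constants K > 0 and t₀ > a such that |(1/t)∫_a^t h(s) ds − Ĥ| ≤ K/t for all t ≥ t₀. -/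
/-!
Integrating term by term, a resonant term (`mᵗΩ = 0`) contributes `(t - a) ℓ_m`, while a
non-resonant one contributes at most `2 ‖ℓ_m‖ / |mᵗΩ|`, uniformly in `t`. The Diophantine
condition bounds `1 / |mᵗΩ|` by a power of `‖m‖`, which the exponential decay of `ℓ` absorbs,
so these bounds are summable and the time average differs from `Ĥ` by `O(1 / t)`.
-/

open Complex (I)
open scoped Nat

theorem norm_exp_neg_I_mul_mul (x s : ℝ) : ‖Complex.exp (-I * x * s)‖ = 1 := by
  rw [show -I * x * s = ((-(x * s) : ℝ) : ℂ) * I by push_cast; ring]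
  exact Complex.norm_exp_ofReal_mul_I _

-- For `ω = 0` both sides vanish, the right one because `x / 0 = 0`.
theorem norm_intervalIntegral_mul_exp_sub_le (c : ℂ) (ω a t : ℝ) :
    ‖(∫ s in a..t, c * Complex.exp (-I * ω * s)) - (t - a) * (if ω = 0 then c else 0)‖ ≤
      2 * (‖c‖ / |ω|) := by
  rcases eq_or_ne ω 0 with rfl | hω
  · simp [mul_comm]
  have hIω : -I * ω ≠ 0 := by simpa using hω
  rw [if_neg hω, mul_zero, sub_zero, intervalIntegral.integral_const_mul,
    integral_exp_mul_complex hIω, norm_mul, norm_div, mul_div_assoc', mul_div_assoc']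
  have hden : ‖-I * (ω : ℂ)‖ = |ω| := by simp
  have hnum : ‖Complex.exp (-I * ω * t) - Complex.exp (-I * ω * a)‖ ≤ 2 := by
    calc _ ≤ ‖Complex.exp (-I * ω * t)‖ + ‖Complex.exp (-I * ω * a)‖ := norm_sub_le _ _
      _ = 2 := by rw [norm_exp_neg_I_mul_mul, norm_exp_neg_I_mul_mul]; norm_num
  rw [hden, mul_comm 2]
  gcongr ?_ / _
  exact mul_le_mul_of_nonneg_left hnum (norm_nonneg c)

section TimeAverage

variable {ι : Type*} {ℓ : ι → ℂ}

theorem summable_mul_exp_neg_I_mul (hℓ : Summable (‖ℓ ·‖)) (ω : ι → ℝ) (s : ℝ) :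
    Summable fun i => ℓ i * Complex.exp (-I * ω i * s) :=
  hℓ.of_norm_bounded fun i => by rw [norm_mul, norm_exp_neg_I_mul_mul, mul_one]

theorem hasSum_intervalIntegral_mul_exp [Countable ι] (hℓ : Summable (‖ℓ ·‖)) (ω : ι → ℝ)
    (a t : ℝ) :
    HasSum (fun i => ∫ s in a..t, ℓ i * Complex.exp (-I * ω i * s))
      (∫ s in a..t, ∑' i, ℓ i * Complex.exp (-I * ω i * s)) := by
  refine intervalIntegral.hasSum_integral_of_dominated_convergence (fun i _ => ‖ℓ i‖)
    (fun i => (by fun_prop : Continuous _).aestronglyMeasurable)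
    (fun i => .of_forall fun s _ => ?_) (.of_forall fun _ _ => hℓ) intervalIntegrable_const
    (.of_forall fun s _ => (summable_mul_exp_neg_I_mul hℓ ω s).hasSum)
  rw [norm_mul, norm_exp_neg_I_mul_mul, mul_one]

theorem norm_intervalIntegral_tsum_sub_le [Countable ι] {ω : ι → ℝ} (hℓ : Summable (‖ℓ ·‖))
    (hω : Summable fun i => ‖ℓ i‖ / |ω i|) (a t : ℝ) :
    ‖(∫ s in a..t, ∑' i, ℓ i * Complex.exp (-I * ω i * s)) -
        (t - a) * ∑' i : {i // ω i = 0}, ℓ i‖ ≤ 2 * ∑' i, ‖ℓ i‖ / |ω i| := by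
  have hres : HasSum (fun i => (t - a) * (if ω i = 0 then ℓ i else 0))
      ((t - a) * ∑' i : {i // ω i = 0}, ℓ i) := by
    have := ((hℓ.of_norm.indicator {i | ω i = 0}).hasSum).mul_left ((t : ℂ) - a)
    rwa [← tsum_subtype] at this
  rw [← ((hasSum_intervalIntegral_mul_exp hℓ ω a t).sub hres).tsum_eq]
  exact tsum_of_norm_bounded (hω.hasSum.mul_left 2) fun i =>
    norm_intervalIntegral_mul_exp_sub_le (ℓ i) (ω i) a t

theorem exists_norm_timeAverage_sub_le [Countable ι] {ω : ι → ℝ} (hℓ : Summable (‖ℓ ·‖))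
    (hω : Summable fun i => ‖ℓ i‖ / |ω i|) (a : ℝ) :
    ∃ K : ℝ, 0 < K ∧ ∃ t₀ : ℝ, a < t₀ ∧ ∀ t : ℝ, t₀ ≤ t →
      ‖(1 / (t : ℂ)) * (∫ s in a..t, ∑' i, ℓ i * Complex.exp (-I * ω i * s)) -
          ∑' i : {i // ω i = 0}, ℓ i‖ ≤ K / t := by
  set H := ∑' i : {i // ω i = 0}, ℓ i
  set S := ∑' i, ‖ℓ i‖ / |ω i|
  have hS : 0 ≤ S := tsum_nonneg fun i => by positivity
  refine ⟨2 * S + |a| * ‖H‖ + 1, by positivity, |a| + 1, by linarith [le_abs_self a],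
    fun t ht => ?_⟩
  have ht0 : 0 < t := by linarith [abs_nonneg a]
  set J := ∫ s in a..t, ∑' i, ℓ i * Complex.exp (-I * ω i * s)
  have hsplit : 1 / (t : ℂ) * J - H = ((J - (t - a) * H) - a * H) / t := by
    field_simp [Complex.ofReal_ne_zero.mpr ht0.ne']
    ring
  rw [hsplit, norm_div, Complex.norm_real, Real.norm_of_nonneg ht0.le]
  gcongr
  calc ‖J - (t - a) * H - a * H‖ ≤ ‖J - (t - a) * H‖ + ‖(a : ℂ) * H‖ := norm_sub_le _ _
    _ ≤ 2 * S + |a| * ‖H‖ := by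
        rw [norm_mul, Complex.norm_real, Real.norm_eq_abs]
        gcongr
        exact norm_intervalIntegral_tsum_sub_le hℓ hω a t
    _ ≤ 2 * S + |a| * ‖H‖ + 1 := by linarith

end TimeAverage

theorem summable_prod_apply_of_nonneg {α : Type*} {f : α → ℝ} (hf₀ : 0 ≤ f) (hf : Summable f) :
    ∀ n : ℕ, Summable fun m : Fin n → α => ∏ j, f (m j)
  | 0 => .of_finite
  | n + 1 => by
    rw [← (Fin.consEquiv fun _ : Fin (n + 1) => α).summable_iff]
    refine (hf.mul_of_nonneg (summable_prod_apply_of_nonneg hf₀ hf n) hf₀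
      fun _ => Finset.prod_nonneg fun _ _ => hf₀ _).congr fun p => ?_
    simp [Fin.prod_univ_succ]

theorem summable_exp_neg_mul_abs_int {ε : ℝ} (hε : 0 < ε) :
    Summable fun k : ℤ => Real.exp (-ε * |(k : ℝ)|) := by
  have hnat : Summable fun n : ℕ => Real.exp (n * -ε) :=
    Real.summable_exp_nat_mul_iff.mpr (by linarith)
  refine .of_nat_of_neg (hnat.congr fun n => ?_) (hnat.congr fun n => ?_) <;>
    simp [mul_comm]

theorem summable_exp_neg_mul_sqrt_sum_sq (n : ℕ) {ε : ℝ} (hε : 0 < ε) :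
    Summable fun m : Fin n → ℤ => Real.exp (-ε * √(∑ j, (m j : ℝ) ^ 2)) := by
  -- The rate `ε / (n + 1)` rather than `ε / n` stays positive when `n = 0`.
  have hprod := summable_prod_apply_of_nonneg (fun _ => (Real.exp_pos _).le)
    (summable_exp_neg_mul_abs_int (ε := ε / (n + 1)) (by positivity)) n
  refine .of_nonneg_of_le (fun _ => (Real.exp_pos _).le) (fun m => ?_) hprod
  have habs : ∀ j, |(m j : ℝ)| ≤ √(∑ j, (m j : ℝ) ^ 2) := fun j =>
    Real.abs_le_sqrt (Finset.single_le_sum (fun i _ => sq_nonneg (m i : ℝ)) (Finset.mem_univ j))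
  have hsum : ∑ j, |(m j : ℝ)| ≤ (n + 1) * √(∑ j, (m j : ℝ) ^ 2) := by
    calc ∑ j, |(m j : ℝ)| ≤ n * √(∑ j, (m j : ℝ) ^ 2) := by
          simpa using Finset.sum_le_sum fun j (_ : j ∈ Finset.univ) => habs j
      _ ≤ _ := by nlinarith [Real.sqrt_nonneg (∑ j, (m j : ℝ) ^ 2)]
  rw [← div_le_iff₀' (by positivity)] at hsum
  rw [← Real.exp_sum, Real.exp_le_exp, ← Finset.mul_sum]
  calc -ε * √(∑ j, (m j : ℝ) ^ 2) ≤ -ε * ((∑ j, |(m j : ℝ)|) / (n + 1)) :=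
        mul_le_mul_of_nonpos_left hsum (by linarith)
    _ = _ := by ring

theorem one_le_sqrt_sum_sq_of_ne_zero {n : ℕ} {m : Fin n → ℤ} (hm : m ≠ 0) :
    1 ≤ √(∑ j, (m j : ℝ) ^ 2) := by
  obtain ⟨j, hj⟩ := Function.ne_iff.mp hm
  have hj : (1 : ℝ) ≤ (m j : ℝ) ^ 2 := by
    exact_mod_cast (one_le_sq_iff_one_le_abs _).mpr (Int.one_le_abs hj)
  rw [Real.one_le_sqrt]
  exact hj.trans (Finset.single_le_sum (fun i _ => sq_nonneg (m i : ℝ)) (Finset.mem_univ j))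

theorem rpow_le_factorial_div_pow_mul_exp {x : ℝ} (hx : 1 ≤ x) (δ : ℝ) {c : ℝ} (hc : 0 < c) :
    x ^ δ ≤ (⌈δ⌉₊ ! / c ^ ⌈δ⌉₊) * Real.exp (c * x) := by
  calc x ^ δ ≤ x ^ ⌈δ⌉₊ := by
        simpa using Real.rpow_le_rpow_of_exponent_le hx (Nat.le_ceil δ)
    _ = (c * x) ^ ⌈δ⌉₊ / ⌈δ⌉₊ ! * (⌈δ⌉₊ ! / c ^ ⌈δ⌉₊) := by
        field_simp
        ring
    _ ≤ Real.exp (c * x) * (⌈δ⌉₊ ! / c ^ ⌈δ⌉₊) := by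
        gcongr
        exact Real.pow_div_factorial_le_exp _ (by positivity) _
    _ = _ := mul_comm _ _

theorem summable_norm_div_abs_of_diophantine {n : ℕ} {Ω : Fin n → ℝ} {δ₁ δ₂ : ℝ} (hδ₁ : 0 < δ₁)
    (hdio : ∀ m : Fin n → ℤ, (∑ j, (m j : ℝ) * Ω j) ≠ 0 →
      δ₁ * (√(∑ j, (m j : ℝ) ^ 2)) ^ (-δ₂) ≤ |∑ j, (m j : ℝ) * Ω j|)
    {ℓ : (Fin n → ℤ) → ℂ} {c₁ c₂ : ℝ} (hc₁ : 0 ≤ c₁) (hc₂ : 0 < c₂)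
    (hℓ : ∀ m, ‖ℓ m‖ ≤ c₁ * Real.exp (-c₂ * √(∑ j, (m j : ℝ) ^ 2))) :
    Summable fun m => ‖ℓ m‖ / |∑ j, (m j : ℝ) * Ω j| := by
  set C := ⌈δ₂⌉₊ ! / (c₂ / 2) ^ ⌈δ₂⌉₊
  refine .of_nonneg_of_le (fun m => by positivity) (fun m => ?_)
    ((summable_exp_neg_mul_sqrt_sum_sq n (half_pos hc₂)).mul_left (c₁ * C / δ₁))
  set N := √(∑ j, (m j : ℝ) ^ 2)
  set ω := ∑ j, (m j : ℝ) * Ω j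
  rcases eq_or_ne ω 0 with hω | hω
  · rw [hω, abs_zero, div_zero]
    positivity
  have hN : 1 ≤ N := one_le_sqrt_sum_sq_of_ne_zero (by rintro rfl; simp [ω] at hω)
  have hNδ : 0 < N ^ δ₂ := Real.rpow_pos_of_pos (by linarith) _
  have hinv : 1 / |ω| ≤ N ^ δ₂ / δ₁ := by
    have := hdio m hω
    rw [Real.rpow_neg (by linarith), ← div_eq_mul_inv, div_le_iff₀ hNδ] at this
    rw [div_le_div_iff₀ (abs_pos.mpr hω) hδ₁]
    linarith
  calc ‖ℓ m‖ / |ω| = ‖ℓ m‖ * (1 / |ω|) := by ring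
    _ ≤ c₁ * Real.exp (-c₂ * N) * (N ^ δ₂ / δ₁) := by
        gcongr
        exact hℓ m
    _ ≤ c₁ * Real.exp (-c₂ * N) * (C * Real.exp (c₂ / 2 * N) / δ₁) := by
        gcongr
        exact rpow_le_factorial_div_pow_mul_exp hN δ₂ (half_pos hc₂)
    _ = c₁ * C / δ₁ * Real.exp (-(c₂ / 2) * N) := by
        rw [show -c₂ * N = -(c₂ / 2) * N - c₂ / 2 * N by ring, Real.exp_sub]
        field_simp

theorem diophantine_time_average_general
    (g : ℕ) (Ω : Fin g → ℝ) (δ₁ δ₂ : ℝ) (hδ₁ : 0 < δ₁)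
    (hdio : ∀ m : Fin g → ℤ, (∑ j, (m j : ℝ) * Ω j) ≠ 0 →
      δ₁ * (Real.sqrt (∑ j, ((m j : ℝ)) ^ 2)) ^ (-δ₂) ≤ |∑ j, (m j : ℝ) * Ω j|)
    (ℓ : (Fin g → ℤ) → ℂ) (c₁ c₂ : ℝ) (hc₁ : 0 < c₁) (hc₂ : 0 < c₂)
    (hℓ : ∀ m : Fin g → ℤ,
      ‖ℓ m‖ ≤ c₁ * Real.exp (-c₂ * Real.sqrt (∑ j, ((m j : ℝ)) ^ 2))) :
    (∀ t : ℝ, Summable (fun m : Fin g → ℤ =>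
      ℓ m * Complex.exp (-Complex.I * ((∑ j, (m j : ℝ) * Ω j : ℝ) : ℂ) * (t : ℂ)))) ∧
    ∀ a : ℝ, ∃ K : ℝ, 0 < K ∧ ∃ t₀ : ℝ, a < t₀ ∧ ∀ t : ℝ, t₀ ≤ t →
      ‖(1 / (t : ℂ)) *
          (∫ s in a..t, ∑' m : Fin g → ℤ,
            ℓ m * Complex.exp (-Complex.I * ((∑ j, (m j : ℝ) * Ω j : ℝ) : ℂ) * (s : ℂ))) -
          ∑' m : {m : Fin g → ℤ // (∑ j, (m j : ℝ) * Ω j) = 0}, ℓ m‖ ≤ K / t := by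
  have hℓsum : Summable (‖ℓ ·‖) := .of_nonneg_of_le (fun _ => norm_nonneg _) hℓ
    ((summable_exp_neg_mul_sqrt_sum_sq g hc₂).mul_left c₁)
  exact ⟨summable_mul_exp_neg_I_mul hℓsum _, exists_norm_timeAverage_sub_le hℓsum
    (summable_norm_div_abs_of_diophantine hδ₁ hdio hc₁.le hc₂ hℓ)⟩

/-- Let `Ω ∈ ℝ^g` have the good Diophantine property with constants `δ₁, δ₂ > 0`, and
let `ℓ : ℤ^g → ℂ` have exponentially decaying coefficients. Then the series
`h(t) = Σ_m ℓ_m e^{−i(mᵗΩ)t}` converges absolutely for every `t`, and with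
`Ĥ = Σ_{mᵗΩ = 0} ℓ_m`, for every `a ∈ ℝ` there are `K > 0` and `t₀ > a` with
`|(1/t)∫_a^t h(s) ds − Ĥ| ≤ K/t` for all `t ≥ t₀`. -/
theorem diophantine_time_average
    (g : ℕ) (hg : 1 ≤ g) (Ω : Fin g → ℝ) (δ₁ δ₂ : ℝ) (hδ₁ : 0 < δ₁) (hδ₂ : 0 < δ₂)
    (hdio : ∀ m : Fin g → ℤ, (∑ j, (m j : ℝ) * Ω j) ≠ 0 →
      δ₁ * (Real.sqrt (∑ j, ((m j : ℝ)) ^ 2)) ^ (-δ₂) ≤ |∑ j, (m j : ℝ) * Ω j|)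
    (ℓ : (Fin g → ℤ) → ℂ) (c₁ c₂ : ℝ) (hc₁ : 0 < c₁) (hc₂ : 0 < c₂)
    (hℓ : ∀ m : Fin g → ℤ,
      ‖ℓ m‖ ≤ c₁ * Real.exp (-c₂ * Real.sqrt (∑ j, ((m j : ℝ)) ^ 2))) :
    (∀ t : ℝ, Summable (fun m : Fin g → ℤ =>
      ℓ m * Complex.exp (-Complex.I * ((∑ j, (m j : ℝ) * Ω j : ℝ) : ℂ) * (t : ℂ)))) ∧
    ∀ a : ℝ, ∃ K : ℝ, 0 < K ∧ ∃ t₀ : ℝ, a < t₀ ∧ ∀ t : ℝ, t₀ ≤ t →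
      ‖(1 / (t : ℂ)) *
          (∫ s in a..t, ∑' m : Fin g → ℤ,
            ℓ m * Complex.exp (-Complex.I * ((∑ j, (m j : ℝ) * Ω j : ℝ) : ℂ) * (s : ℂ))) -
          ∑' m : {m : Fin g → ℤ // (∑ j, (m j : ℝ) * Ω j) = 0}, ℓ m‖ ≤ K / t :=
  diophantine_time_average_general g Ω δ₁ δ₂ hδ₁ hdio ℓ c₁ c₂ hc₁ hc₂ hℓ
end

section
/- Let g ≥ 1 and let Ω ∈ ℝ^g be such that Ω₁, …, Ω_g are rationally independent. Let H : ℝ^g → ℝ be continuous and ℤ^g-periodic, i.e., H(x + m) = H(x) for all x ∈ ℝ^g and m ∈ ℤ^g. Then for every x ∈ ℝ^g, lim_{T→+∞} (1/T) ∫_0^T H(tΩ + x) dt = ∫_{[0,1]^g} H(y) dy. -/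
/-!
Time and space averages are continuous linear functionals of `H`, viewed as a continuous function
on the torus `ℝ^g/ℤ^g`, and the time averages have norm at most `1` uniformly in `T`; so the set of
functions on which they converge to the space average is a closed subspace. It contains every
character `e_n(y) = exp(2πi⟨n, y⟩)`: for `n = 0` both averages are `1`, while for `n ≠ 0` the
space average vanishes and, since `⟨n, Ω⟩ ≠ 0` by rational independence, the time average is
`O(1/T)`. Characters span a dense subspace by Stone–Weierstrass.
-/

open Filter Topology MeasureTheory Set UnitAddTorus Complex
open scoped NNReal Real

section DenseSpan

variable {𝕜 E F ι : Type*} [NontriviallyNormedField 𝕜] [SeminormedAddCommGroup E]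
  [NormedSpace 𝕜 E] [SeminormedAddCommGroup F] [NormedSpace 𝕜 F]

def ContinuousLinearMap.tendstoSubmodule (A : ι → E →L[𝕜] F) (l : Filter ι) (B : E →L[𝕜] F) :
    Submodule 𝕜 E where
  carrier := {v | Tendsto (A · v) l (𝓝 (B v))}
  zero_mem' := by simpa using tendsto_const_nhds
  add_mem' {v w} hv hw := by simpa using hv.add hw
  smul_mem' c v hv := by simpa using hv.const_smul c

theorem ContinuousLinearMap.tendsto_of_span_closure_eq_top {A : ι → E →L[𝕜] F} {l : Filter ι}
    {B : E →L[𝕜] F} {C : ℝ≥0} (hA : ∀ i, ‖A i‖ ≤ C) {s : Set E}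
    (hs : (Submodule.span 𝕜 s).topologicalClosure = ⊤)
    (h : ∀ v ∈ s, Tendsto (A · v) l (𝓝 (B v))) (v : E) :
    Tendsto (A · v) l (𝓝 (B v)) := by
  have hequi : Equicontinuous (fun i => ⇑(A i)) :=
    (LipschitzWith.uniformEquicontinuous _ C fun i =>
      lipschitzWith_of_opNorm_le (hA i)).equicontinuous
  have hclosed : IsClosed {v | Tendsto (A · v) l (𝓝 (B v))} :=
    hequi.isClosed_setOfPred_tendsto B.continuous
  have hspan : Submodule.span 𝕜 s ≤ tendstoSubmodule A l B := Submodule.span_le.mpr h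
  exact Submodule.topologicalClosure_minimal _ hspan hclosed (hs ▸ Submodule.mem_top)

end DenseSpan

section Torus

variable {d : Type*}

def toTorus : C(d → ℝ, UnitAddTorus d) where
  toFun y i := y i
  continuous_toFun := by fun_prop

theorem isQuotientMap_toTorus : IsQuotientMap (toTorus (d := d)) :=
  (IsOpenQuotientMap.piMap fun _ => QuotientAddGroup.isOpenQuotientMap_mk).isQuotientMap

theorem toTorus_eq_toTorus_iff {y z : d → ℝ} :
    toTorus y = toTorus z ↔ ∃ m : d → ℤ, z = y + fun i => (m i : ℝ) := by
  simp only [toTorus, ContinuousMap.coe_mk, funext_iff, QuotientAddGroup.eq,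
    AddSubgroup.mem_zmultiples_iff, zsmul_eq_mul, mul_one, Pi.add_apply]
  constructor
  · intro h
    choose m hm using h
    exact ⟨m, fun i => by linarith [hm i]⟩
  · rintro ⟨m, hm⟩ i
    exact ⟨m i, by rw [hm i]; ring⟩

theorem exists_continuousMap_comp_toTorus_eq {X : Type*} [TopologicalSpace X]
    {f : (d → ℝ) → X} (hf : Continuous f)
    (hper : ∀ (y : d → ℝ) (m : d → ℤ), f (y + fun i => (m i : ℝ)) = f y) :
    ∃ F : C(UnitAddTorus d, X), ∀ y, F (toTorus y) = f y := by
  have hfac : Function.FactorsThrough f toTorus := fun y z h => by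
    obtain ⟨m, rfl⟩ := toTorus_eq_toTorus_iff.mp h
    exact (hper y m).symm
  exact ⟨isQuotientMap_toTorus.lift ⟨f, hf⟩ hfac, fun y =>
    DFunLike.congr_fun (isQuotientMap_toTorus.lift_comp ⟨f, hf⟩ hfac) y⟩

variable [Fintype d]

theorem volume_real_Icc_zero_one : volume.real (Icc (0 : d → ℝ) 1) = 1 := by
  simp [Measure.real, Real.volume_Icc_pi]

noncomputable def cubeAverage : C(UnitAddTorus d, ℂ) →L[ℂ] ℂ :=
  LinearMap.mkContinuous
    { toFun f := ∫ y in Icc (0 : d → ℝ) 1, f (toTorus y)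
      map_add' f g := integral_add
        ((f.comp toTorus).continuous.integrableOn_Icc)
        ((g.comp toTorus).continuous.integrableOn_Icc)
      map_smul' c f := integral_smul c _ }
    1 fun f => by
      simpa [volume_real_Icc_zero_one] using norm_setIntegral_le_of_norm_le_const
        (s := Icc (0 : d → ℝ) 1) (μ := volume) isCompact_Icc.measure_lt_top
        fun y _ => f.norm_coe_le_norm (toTorus y)

theorem cubeAverage_apply (f : C(UnitAddTorus d, ℂ)) :
    cubeAverage f = ∫ y in Icc (0 : d → ℝ) 1, f (toTorus y) := rfl

noncomputable def flowAverage (Ω x : d → ℝ) (T : ℝ) : C(UnitAddTorus d, ℂ) →L[ℂ] ℂ :=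
  LinearMap.mkContinuous
    { toFun f := (T : ℂ)⁻¹ * ∫ t in (0 : ℝ)..T, f (toTorus (t • Ω + x))
      map_add' f g := by
        rw [← mul_add, ← intervalIntegral.integral_add]
        · rfl
        all_goals exact (ContinuousMap.continuous _).comp (by fun_prop) |>.intervalIntegrable _ _
      map_smul' c f := by
        simp only [ContinuousMap.smul_apply, smul_eq_mul, intervalIntegral.integral_const_mul,
          RingHom.id_apply]
        ring }
    1 fun f => by
      rw [LinearMap.coe_mk, AddHom.coe_mk, one_mul, norm_mul, norm_inv, norm_real,
        Real.norm_eq_abs]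
      calc |T|⁻¹ * ‖∫ t in (0 : ℝ)..T, f (toTorus (t • Ω + x))‖
          ≤ |T|⁻¹ * (‖f‖ * |T - 0|) := by
            gcongr
            exact intervalIntegral.norm_integral_le_of_norm_le_const
              fun t _ => f.norm_coe_le_norm _
        _ ≤ ‖f‖ := by
            rw [sub_zero]
            rcases eq_or_ne T 0 with rfl | hT
            · simp
            · rw [mul_comm ‖f‖, inv_mul_cancel_left₀ (abs_ne_zero.mpr hT)]

theorem flowAverage_apply (Ω x : d → ℝ) (T : ℝ) (f : C(UnitAddTorus d, ℂ)) :
    flowAverage Ω x T f = (T : ℂ)⁻¹ * ∫ t in (0 : ℝ)..T, f (toTorus (t • Ω + x)) := rfl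

theorem norm_flowAverage_le (Ω x : d → ℝ) (T : ℝ) : ‖flowAverage Ω x T‖ ≤ 1 :=
  LinearMap.mkContinuous_norm_le _ zero_le_one _

theorem mFourier_toTorus (n : d → ℤ) (y : d → ℝ) :
    mFourier n (toTorus y) = exp ((2 * π * ∑ i, n i * y i : ℝ) * I) := by
  simp only [mFourier, toTorus, ContinuousMap.coe_mk, fourier_coe_apply, Finset.mul_sum,
    Finset.sum_mul, ofReal_sum, exp_sum]
  exact Finset.prod_congr rfl fun i _ => by push_cast; ring_nf

theorem integral_fourier_of_ne_zero {n : ℤ} (hn : n ≠ 0) :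
    ∫ t in (0 : ℝ)..1, fourier n (t : UnitAddCircle) = 0 := by
  have h := fourierCoeff_eq_intervalIntegral (T := 1) (fourier n) 0 0
  rw [fourierCoeff_fourier, Pi.single_eq_of_ne' hn] at h
  simpa using h.symm

theorem cubeAverage_one : cubeAverage (1 : C(UnitAddTorus d, ℂ)) = 1 := by
  simp [cubeAverage_apply, volume_real_Icc_zero_one]

theorem cubeAverage_mFourier_of_ne_zero {n : d → ℤ} (hn : n ≠ 0) :
    cubeAverage (mFourier n) = 0 := by
  obtain ⟨i, hi⟩ := Function.ne_iff.mp hn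
  rw [cubeAverage_apply, ← pi_univ_Icc, volume_pi, Measure.restrict_pi_pi]
  refine (integral_fintype_prod_eq_prod (μ := fun _ => volume.restrict (Icc (0 : ℝ) 1))
    fun i (t : ℝ) => fourier (n i) (t : UnitAddCircle)).trans
    (Finset.prod_eq_zero (Finset.mem_univ i) ?_)
  rw [integral_Icc_eq_integral_Ioc, ← intervalIntegral.integral_of_le zero_le_one]
  exact integral_fourier_of_ne_zero hi

theorem flowAverage_one (Ω x : d → ℝ) {T : ℝ} (hT : T ≠ 0) :
    flowAverage Ω x T (1 : C(UnitAddTorus d, ℂ)) = 1 := by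
  simp [flowAverage_apply, hT]

theorem mFourier_toTorus_flow (n : d → ℤ) (Ω x : d → ℝ) (t : ℝ) :
    mFourier n (toTorus (t • Ω + x)) =
      mFourier n (toTorus x) * exp ((2 * π * ∑ i, n i * Ω i : ℝ) * t * I) := by
  have hphase : 2 * π * ∑ i, n i * (t • Ω + x) i =
      2 * π * ∑ i, n i * x i + (2 * π * ∑ i, n i * Ω i) * t := by
    simp only [Pi.add_apply, Pi.smul_apply, smul_eq_mul, Finset.mul_sum, Finset.sum_mul,
      ← Finset.sum_add_distrib]
    exact Finset.sum_congr rfl fun i _ => by ring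
  rw [mFourier_toTorus, mFourier_toTorus, ← exp_add, hphase]
  push_cast
  ring_nf

theorem tendsto_average_exp_mul_I {a : ℝ} (ha : a ≠ 0) :
    Tendsto (fun T : ℝ => (T : ℂ)⁻¹ * ∫ t in (0 : ℝ)..T, exp (a * t * I)) atTop (𝓝 0) := by
  have haI : (a : ℂ) * I ≠ 0 := mul_ne_zero (ofReal_ne_zero.mpr ha) I_ne_zero
  have hbound (T : ℝ) : ‖∫ t in (0 : ℝ)..T, exp (a * t * I)‖ ≤ 2 / |a| := by
    have hprim : ∫ t in (0 : ℝ)..T, exp (a * t * I) = (exp (a * T * I) - 1) / (a * I) := by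
      simpa [mul_right_comm _ I] using integral_exp_mul_complex (a := 0) (b := T) haI
    rw [hprim, norm_div, norm_mul, norm_I, mul_one, norm_real, Real.norm_eq_abs]
    gcongr
    calc ‖exp (a * T * I) - 1‖ ≤ ‖exp (a * T * I)‖ + ‖(1 : ℂ)‖ := norm_sub_le _ _
      _ = 2 := by rw [← ofReal_mul, norm_exp_ofReal_mul_I, norm_one]; norm_num
  have hinv : Tendsto (fun T : ℝ => (T : ℂ)⁻¹) atTop (𝓝 0) := by
    simpa [Function.comp_def] using (continuous_ofReal.tendsto 0).comp tendsto_inv_atTop_zero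
  exact hinv.zero_mul_isBoundedUnder_le ⟨2 / |a|, eventually_map.mpr (.of_forall hbound)⟩

theorem tendsto_flowAverage_mFourier {Ω : d → ℝ}
    (hΩ : ∀ n : d → ℤ, ∑ i, (n i : ℝ) * Ω i = 0 → n = 0) (x : d → ℝ) (n : d → ℤ) :
    Tendsto (flowAverage Ω x · (mFourier n)) atTop (𝓝 (cubeAverage (mFourier n))) := by
  rcases eq_or_ne n 0 with rfl | hn
  · rw [mFourier_zero, cubeAverage_one]
    exact tendsto_const_nhds.congr'
      ((eventually_ne_atTop 0).mono fun T hT => (flowAverage_one Ω x hT).symm)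
  · have ha : 2 * π * ∑ i, (n i : ℝ) * Ω i ≠ 0 := mul_ne_zero (by positivity) (mt (hΩ n) hn)
    have heq (T : ℝ) : flowAverage Ω x T (mFourier n) = mFourier n (toTorus x) *
        ((T : ℂ)⁻¹ * ∫ t in (0 : ℝ)..T, exp ((2 * π * ∑ i, n i * Ω i : ℝ) * t * I)) := by
      simp only [flowAverage_apply, mFourier_toTorus_flow, intervalIntegral.integral_const_mul]
      ring
    rw [cubeAverage_mFourier_of_ne_zero hn]
    simpa [heq] using (tendsto_average_exp_mul_I ha).const_mul (mFourier n (toTorus x))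

theorem tendsto_flowAverage {Ω : d → ℝ} (hΩ : ∀ n : d → ℤ, ∑ i, (n i : ℝ) * Ω i = 0 → n = 0)
    (x : d → ℝ) (f : C(UnitAddTorus d, ℂ)) :
    Tendsto (flowAverage Ω x · f) atTop (𝓝 (cubeAverage f)) :=
  ContinuousLinearMap.tendsto_of_span_closure_eq_top (C := 1) (norm_flowAverage_le Ω x)
    span_mFourier_closure_eq_top (by rintro _ ⟨n, rfl⟩; exact tendsto_flowAverage_mFourier hΩ x n)
    f

end Torus

theorem time_average_eq_space_average_general
    (g : ℕ) (Ω : Fin g → ℝ)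
    (hΩ : ∀ n : Fin g → ℤ, (∑ j, (n j : ℝ) * Ω j) = 0 → n = 0)
    (H : (Fin g → ℝ) → ℝ) (hH : Continuous H)
    (hper : ∀ (x : Fin g → ℝ) (m : Fin g → ℤ), H (x + fun i => (m i : ℝ)) = H x)
    (x : Fin g → ℝ) :
    Filter.Tendsto (fun T : ℝ => (1 / T) * ∫ t in (0:ℝ)..T, H (t • Ω + x))
      Filter.atTop (nhds (∫ y in Set.Icc (0 : Fin g → ℝ) 1, H y)) := by
  obtain ⟨F, hF⟩ := exists_continuousMap_comp_toTorus_eq (continuous_ofReal.comp hH)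
    fun y m => congrArg ofReal (hper y m)
  have h := tendsto_flowAverage hΩ x F
  simp only [flowAverage_apply, cubeAverage_apply, hF, Function.comp_apply,
    intervalIntegral.integral_ofReal, integral_complex_ofReal, ← ofReal_inv, ← ofReal_mul] at h
  simpa using tendsto_ofReal_iff.mp h

/-- Birkhoff ergodic theorem for linear flows on the torus: if `Ω₁, …, Ω_g` are
rationally independent and `H : ℝ^g → ℝ` is continuous and `ℤ^g`-periodic, then for
every `x ∈ ℝ^g` the time average `(1/T)∫_0^T H(tΩ + x) dt` converges to the space
average `∫_{[0,1]^g} H(y) dy` as `T → +∞`. -/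
theorem time_average_eq_space_average
    (g : ℕ) (hg : 1 ≤ g) (Ω : Fin g → ℝ)
    (hΩ : ∀ n : Fin g → ℤ, (∑ j, (n j : ℝ) * Ω j) = 0 → n = 0)
    (H : (Fin g → ℝ) → ℝ) (hH : Continuous H)
    (hper : ∀ (x : Fin g → ℝ) (m : Fin g → ℤ), H (x + fun i => (m i : ℝ)) = H x)
    (x : Fin g → ℝ) :
    Filter.Tendsto (fun T : ℝ => (1 / T) * ∫ t in (0:ℝ)..T, H (t • Ω + x))
      Filter.atTop (nhds (∫ y in Set.Icc (0 : Fin g → ℝ) 1, H y)) :=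
  time_average_eq_space_average_general g Ω hΩ H hH hper x
end

section
/- Let g ≥ 1, Ω ∈ ℝ^g, and c ∈ ℝ^g. The following are equivalent: (i) the orbit {tΩ + c : t ∈ (0, +∞)} is dense in ℝ^g modulo ℤ^g, i.e., for every x ∈ ℝ^g and every ε > 0 there exist t > 0 and m ∈ ℤ^g with ‖tΩ + c − x − m‖ < ε; (ii) Ω₁, …, Ω_g are rationally independent. -/
/-!
Let `H` be the closure of the subgroup `ℝΩ + ℤ^g` of `ℝ^g`, let `V` be the largest linear subspace
contained in `H` and `W` a complement of `V`. Normalising a sequence of points of `H ∩ W` tending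
to `0` yields, by compactness, a unit vector of `W` whose whole line lies in `H`, which is absurd;
so `H ∩ W` is discrete, and it spans `W` because `H ⊇ ℤ^g`. If `H ≠ ℝ^g`, then `W ≠ 0`, and a
coordinate form of the lattice `H ∩ W`, composed with the projection onto `W`, is a nonzero linear
form `F` with integer values on `H`. It vanishes on the line `ℝΩ`, so `nᵢ = F(eᵢ)` is a nontrivial
integer relation `∑ nᵢΩᵢ = 0`. Conversely, such a relation gives the form `∑ nᵢxᵢ`, integral on
`ℝΩ + ℤ^g` and hence on its closure, which is therefore not `ℝ^g`.

Only positive times are allowed in the orbit. This is harmless: by Bolzano–Weierstrass applied to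
the fractional parts of `nΩ`, the vector `TΩ` comes arbitrarily close to `ℤ^g` for arbitrarily
large `T`, so any time `t` can be shifted to a positive one.
-/

open Filter Topology Set

theorem tendsto_floor_mul_div_atTop {R : Type*} [TopologicalSpace R] [Field R] [LinearOrder R]
    [IsStrictOrderedRing R] [OrderTopology R] [FloorRing R] (a : R) :
    Tendsto (fun x ↦ (⌊a * x⌋ : R) / x) atTop (𝓝 a) := by
  have hlow : Tendsto (fun x : R ↦ a - x⁻¹) atTop (𝓝 a) := by
    simpa using (tendsto_const_nhds (x := a)).sub (tendsto_inv_atTop_zero (𝕜 := R))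
  refine tendsto_of_tendsto_of_tendsto_of_le_of_le' hlow tendsto_const_nhds ?_ ?_
  · filter_upwards [eventually_gt_atTop 0] with x hx
    rw [le_div_iff₀ hx, sub_mul, inv_mul_cancel₀ hx.ne']
    linarith [Int.lt_floor_add_one (a * x)]
  · filter_upwards [eventually_gt_atTop 0] with x hx
    rw [div_le_iff₀ hx]
    exact Int.floor_le _

theorem eq_zero_of_forall_mul_mem_range_intCast {a : ℝ}
    (h : ∀ t : ℝ, t * a ∈ range ((↑) : ℤ → ℝ)) : a = 0 := by
  by_contra ha
  obtain ⟨k, hk⟩ := h (2 * a)⁻¹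
  have : 2 * k = 1 := by exact_mod_cast (by rw [hk]; field_simp : (2 * k : ℝ) = 1)
  omega

namespace AddSubgroup

variable {E : Type*} [NormedAddCommGroup E] [NormedSpace ℝ E] {H : AddSubgroup E}
  {W : Submodule ℝ E}

def linealitySpace (H : AddSubgroup E) : Submodule ℝ E where
  carrier := {v | ∀ t : ℝ, t • v ∈ H}
  add_mem' ha hb t := by simpa only [smul_add] using H.add_mem (ha t) (hb t)
  zero_mem' t := by simp
  smul_mem' c v hv t := by simpa only [smul_smul] using hv (t * c)

theorem linealitySpace_subset : (H.linealitySpace : Set E) ⊆ H :=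
  fun v hv ↦ by simpa using hv 1

theorem mem_linealitySpace_of_tendsto {α : Type*} {l : Filter α} [l.NeBot]
    (hH : IsClosed (H : Set E)) {w : α → E} {c : α → ℝ} {u : E} (hw : ∀ a, w a ∈ H)
    (hc : Tendsto c l atTop) (hu : Tendsto (fun a ↦ c a • w a) l (𝓝 u)) :
    u ∈ H.linealitySpace := by
  intro t
  have hlim : Tendsto (fun a ↦ ((⌊t * c a⌋ : ℝ) / c a) • (c a • w a)) l (𝓝 (t • u)) :=
    ((tendsto_floor_mul_div_atTop t).comp hc).smul hu
  refine hH.mem_of_tendsto hlim ?_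
  filter_upwards [hc.eventually_ne_atTop 0] with a ha
  rw [smul_smul, div_mul_cancel₀ _ ha, Int.cast_smul_eq_zsmul]
  exact H.zsmul_mem (hw a) _

def intSubmoduleOf (H : AddSubgroup E) (W : Submodule ℝ E) : Submodule ℤ W :=
  H.toIntSubmodule.comap (W.subtype.restrictScalars ℤ)

theorem projectionOnto_mem (hc : IsCompl W H.linealitySpace) {x : E} (hx : x ∈ H) :
    (W.projectionOnto _ hc x : E) ∈ H := by
  have hV : x - W.projectionOnto _ hc x ∈ H.linealitySpace := by
    rw [← Submodule.projectionOnto_apply_eq_zero_iff hc, map_sub,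
      Submodule.projectionOnto_apply_left, sub_self]
  simpa using H.sub_mem hx (H.linealitySpace_subset hV)

theorem isZLattice_intSubmoduleOf [DiscreteTopology (H.intSubmoduleOf W)]
    (hc : IsCompl W H.linealitySpace) (hspan : Submodule.span ℝ (H : Set E) = ⊤) :
    IsZLattice ℝ (H.intSubmoduleOf W) := by
  refine ⟨eq_top_iff.2 ?_⟩
  calc ⊤ = (Submodule.span ℝ (H : Set E)).map (W.projectionOnto _ hc) := by
        rw [hspan, Submodule.map_top, Submodule.range_projectionOnto]
    _ = Submodule.span ℝ (W.projectionOnto _ hc '' H) := Submodule.map_span _ _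
    _ ≤ _ := Submodule.span_mono <| by
        rintro _ ⟨x, hx, rfl⟩
        exact H.projectionOnto_mem hc hx

variable [FiniteDimensional ℝ E]

theorem discreteTopology_intSubmoduleOf (hH : IsClosed (H : Set E))
    (hW : Disjoint W H.linealitySpace) : DiscreteTopology (H.intSubmoduleOf W) := by
  suffices IsOpen ({0} : Set (H.intSubmoduleOf W)) from
    discreteTopology_of_isOpen_singleton_zero this
  rw [Metric.isOpen_singleton_iff]
  by_contra! hacc
  have h0 : (0 : E) ∈ _root_.closure {x : E | x ∈ H ∧ x ∈ W ∧ x ≠ 0} := by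
    rw [Metric.mem_closure_iff]
    intro ε hε
    obtain ⟨y, hyε, hy0⟩ := hacc ε hε
    refine ⟨y, ⟨y.2, y.1.2, fun h ↦ hy0 (Subtype.ext (Subtype.ext h))⟩, ?_⟩
    simpa [dist_comm] using hyε
  obtain ⟨w, hw, hw0⟩ := mem_closure_iff_seq_limit.1 h0
  have hdir (n : ℕ) : ‖w n‖⁻¹ • w n ∈ Metric.sphere 0 1 ∩ (W : Set E) :=
    ⟨by simp [norm_smul, (hw n).2.2], W.smul_mem _ (hw n).2.1⟩
  obtain ⟨u, ⟨hu1, huW⟩, φ, hφ, hlim⟩ :=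
    ((isCompact_sphere 0 1).inter_right W.closed_of_finiteDimensional).tendsto_subseq hdir
  have hnorm : Tendsto (fun n ↦ ‖w (φ n)‖) atTop (𝓝[>] 0) :=
    tendsto_nhdsWithin_iff.2 ⟨(tendsto_norm_zero.comp hw0).comp hφ.tendsto_atTop,
      Eventually.of_forall fun n ↦ norm_pos_iff.2 (hw (φ n)).2.2⟩
  have huV : u ∈ H.linealitySpace :=
    H.mem_linealitySpace_of_tendsto hH (fun n ↦ (hw (φ n)).1)
      (tendsto_inv_nhdsGT_zero.comp hnorm) hlim
  rw [Submodule.disjoint_def.1 hW u huW huV] at hu1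
  simp at hu1

theorem exists_ne_zero_forall_map_mem_range_intCast (hH : IsClosed (H : Set E))
    (hspan : Submodule.span ℝ (H : Set E) = ⊤) (hne : H ≠ ⊤) :
    ∃ F : E →ₗ[ℝ] ℝ, F ≠ 0 ∧ ∀ x ∈ H, F x ∈ range ((↑) : ℤ → ℝ) := by
  obtain ⟨W, hc⟩ := H.linealitySpace.exists_isCompl
  have : Nontrivial W := by
    refine Submodule.nontrivial_iff_ne_bot.2 fun hW ↦ hne (eq_top_iff.2 fun x _ ↦ ?_)
    rw [hW] at hc
    exact H.linealitySpace_subset (by simp [eq_top_of_isCompl_bot hc])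
  let L := H.intSubmoduleOf W
  have := H.discreteTopology_intSubmoduleOf hH hc.symm.disjoint
  have := H.isZLattice_intSubmoduleOf hc.symm hspan
  let b := (Module.Free.chooseBasis ℤ L).ofZLatticeBasis ℝ L
  obtain ⟨i⟩ := b.index_nonempty
  refine ⟨b.coord i ∘ₗ W.projectionOnto _ hc.symm, fun h ↦ ?_, fun x hx ↦ ?_⟩
  · simpa [Submodule.projectionOnto_apply_left] using LinearMap.congr_fun h (b i : E)
  · exact ⟨_, (Module.Basis.ofZLatticeBasis_repr_apply ℝ L _
      ⟨_, H.projectionOnto_mem hc.symm hx⟩ i).symm⟩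

end AddSubgroup

section

variable {E : Type*} [NormedAddCommGroup E] [NormedSpace ℝ E] {ι : Type*}
  (b : Module.Basis ι ℝ E) (Ω : E)

def flowSubgroup : AddSubgroup E :=
  (ℝ ∙ Ω).toAddSubgroup ⊔ (Submodule.span ℤ (range b)).toAddSubgroup

theorem smul_mem_flowSubgroup (t : ℝ) : t • Ω ∈ flowSubgroup b Ω :=
  AddSubgroup.mem_sup_left (Submodule.smul_mem _ t (Submodule.mem_span_singleton_self Ω))

theorem basis_mem_flowSubgroup (i : ι) : b i ∈ flowSubgroup b Ω :=
  AddSubgroup.mem_sup_right (Submodule.subset_span (mem_range_self i))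

variable [Fintype ι]

theorem dense_flowSubgroup_iff :
    Dense (flowSubgroup b Ω : Set E) ↔ ∀ n : ι → ℤ, ∑ i, (n i : ℝ) * b.repr Ω i = 0 → n = 0 := by
  have := b.finiteDimensional_of_finite
  constructor
  · intro hdense n hn
    let F : E →ₗ[ℝ] ℝ := ∑ i, (n i : ℝ) • b.coord i
    have hFb (i : ι) : F (b i) = n i := by classical simp [F, Finsupp.single_apply]
    have hG : (flowSubgroup b Ω : Set E) ⊆ F ⁻¹' range ((↑) : ℤ → ℝ) := by
      let K : AddSubgroup E := (Int.castAddHom ℝ).range.comap F.toAddMonoidHom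
      change flowSubgroup b Ω ≤ K
      refine sup_le (fun x hx ↦ ?_) ?_
      · obtain ⟨t, rfl⟩ := Submodule.mem_span_singleton.1 hx
        exact ⟨0, by simp [F, hn]⟩
      · refine (Submodule.toAddSubgroup_le _ K.toIntSubmodule).2 (Submodule.span_le.2 ?_)
        rintro _ ⟨i, rfl⟩
        exact ⟨n i, (hFb i).symm⟩
    have hall (x : E) : F x ∈ range ((↑) : ℤ → ℝ) :=
      closure_minimal hG (Real.isClosed_range_intCast.preimage F.continuous_of_finiteDimensional)
        (hdense.closure_eq ▸ mem_univ x)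
    ext i
    have : (n i : ℝ) = 0 := eq_zero_of_forall_mul_mem_range_intCast fun t ↦ by
      simpa [hFb] using hall (t • b i)
    exact_mod_cast this
  · intro hind
    set H := (flowSubgroup b Ω).topologicalClosure
    rw [dense_iff_closure_eq, ← AddSubgroup.topologicalClosure_coe, ← AddSubgroup.coe_top,
      SetLike.coe_set_eq]
    by_contra hne
    have hbH (i : ι) : b i ∈ H :=
      (flowSubgroup b Ω).le_topologicalClosure (basis_mem_flowSubgroup b Ω i)
    have hspan : Submodule.span ℝ (H : Set E) = ⊤ :=
      eq_top_iff.2 (b.span_eq ▸ Submodule.span_mono (range_subset_iff.2 hbH))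
    obtain ⟨F, hF0, hFH⟩ := H.exists_ne_zero_forall_map_mem_range_intCast
      (flowSubgroup b Ω).isClosed_topologicalClosure hspan hne
    have hFΩ : F Ω = 0 := eq_zero_of_forall_mul_mem_range_intCast fun t ↦ by
      simpa using hFH _ ((flowSubgroup b Ω).le_topologicalClosure (smul_mem_flowSubgroup b Ω t))
    choose n hn using fun i ↦ hFH (b i) (hbH i)
    have hn0 : n = 0 := hind n <| by
      rw [← hFΩ, ← congrArg F (b.sum_repr Ω), map_sum]
      simp only [map_smul, smul_eq_mul, hn, mul_comm]
    exact hF0 (b.ext fun i ↦ by simp [← hn, hn0])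

theorem exists_gt_norm_smul_sub_lt (x : E) (M : ℝ) {δ : ℝ} (hδ : 0 < δ) :
    ∃ T > M, ∃ v ∈ Submodule.span ℤ (range b), ‖T • x - v‖ < δ := by
  have := b.finiteDimensional_of_finite
  obtain ⟨_, -, φ, hφ, hlim⟩ := tendsto_subseq_of_bounded (ZSpan.fundamentalDomain_isBounded b)
    fun n : ℕ ↦ ZSpan.fract_mem_fundamentalDomain b ((n : ℝ) • x)
  obtain ⟨N, hN⟩ := Metric.cauchySeq_iff'.1 hlim.cauchySeq δ hδ
  set k := max N (φ N + ⌈M⌉₊ + 1)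
  have hk : M < (φ k : ℝ) - φ N := by
    have : φ N + ⌈M⌉₊ + 1 ≤ φ k := (le_max_right _ _).trans (hφ.id_le k)
    have : (φ N : ℝ) + ⌈M⌉₊ + 1 ≤ φ k := by exact_mod_cast this
    linarith [Nat.le_ceil M]
  refine ⟨_, hk, ZSpan.floor b ((φ k : ℝ) • x) - ZSpan.floor b ((φ N : ℝ) • x),
    Submodule.sub_mem _ (SetLike.coe_mem _) (SetLike.coe_mem _), ?_⟩
  have hfract : ((φ k : ℝ) - φ N) • x -
      (ZSpan.floor b ((φ k : ℝ) • x) - ZSpan.floor b ((φ N : ℝ) • x)) =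
      ZSpan.fract b ((φ k : ℝ) • x) - ZSpan.fract b ((φ N : ℝ) • x) := by
    simp only [ZSpan.fract_apply, sub_smul]
    abel
  simpa only [hfract, dist_eq_norm, Function.comp_apply] using hN k (le_max_left _ _)

theorem exists_pos_norm_smul_add_sub_lt (hdense : Dense (flowSubgroup b Ω : Set E)) (y : E)
    {ε : ℝ} (hε : 0 < ε) :
    ∃ t : ℝ, 0 < t ∧ ∃ v ∈ Submodule.span ℤ (range b), ‖t • Ω + v - y‖ < ε := by
  obtain ⟨_, hz, hyz⟩ := hdense.exists_dist_lt y (half_pos hε)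
  obtain ⟨_, hs, w, hw, rfl⟩ := AddSubgroup.mem_sup.1 hz
  obtain ⟨s, rfl⟩ := Submodule.mem_span_singleton.1 hs
  obtain ⟨T, hT, v, hv, hTv⟩ := exists_gt_norm_smul_sub_lt b Ω (-s) (half_pos hε)
  refine ⟨s + T, by linarith, w - v, Submodule.sub_mem _ hw hv, ?_⟩
  rw [dist_comm, dist_eq_norm] at hyz
  calc ‖(s + T) • Ω + (w - v) - y‖ = ‖(s • Ω + w - y) + (T • Ω - v)‖ := by
        congr 1; module
    _ ≤ ‖s • Ω + w - y‖ + ‖T • Ω - v‖ := norm_add_le _ _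
    _ < ε := by linarith

end

theorem EuclideanSpace.mem_span_int_basisFun {ι : Type*} [Fintype ι] {v : EuclideanSpace ℝ ι} :
    v ∈ Submodule.span ℤ (range (EuclideanSpace.basisFun ι ℝ).toBasis) ↔
      ∃ m : ι → ℤ, WithLp.toLp 2 (fun i ↦ (m i : ℝ)) = v := by
  simp only [Module.Basis.mem_span_iff_repr_mem, OrthonormalBasis.coe_toBasis_repr_apply,
    EuclideanSpace.basisFun_repr, algebraMap_int_eq, eq_intCast, mem_range]
  constructor
  · intro h
    choose m hm using h
    exact ⟨m, by ext i; simp [hm]⟩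
  · rintro ⟨m, rfl⟩ i
    exact ⟨m i, rfl⟩

theorem orbit_dense_iff_rationally_independent_general
    (g : ℕ) (Ω c : Fin g → ℝ) :
    (∀ x : Fin g → ℝ, ∀ ε : ℝ, 0 < ε → ∃ t : ℝ, 0 < t ∧ ∃ m : Fin g → ℤ,
        Real.sqrt (∑ i, (t * Ω i + c i - x i - (m i : ℝ)) ^ 2) < ε) ↔
      (∀ n : Fin g → ℤ, (∑ j, (n j : ℝ) * Ω j) = 0 → n = 0) := by
  let b := (EuclideanSpace.basisFun (Fin g) ℝ).toBasis
  have hnorm (u : Fin g → ℝ) : √(∑ i, u i ^ 2) = ‖WithLp.toLp 2 u‖ := by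
    simp [EuclideanSpace.norm_eq]
  have hrepr : b.repr (WithLp.toLp 2 Ω) = Ω := by ext; simp [b]
  simp_rw [hnorm]
  rw [← hrepr, ← dense_flowSubgroup_iff b, hrepr]
  constructor
  · intro h
    refine Metric.dense_iff.2 fun y r hr ↦ ?_
    obtain ⟨t, -, m, hm⟩ := h (c + y.ofLp) r hr
    refine ⟨t • WithLp.toLp 2 Ω - WithLp.toLp 2 (fun i ↦ (m i : ℝ)), ?_,
      sub_mem (smul_mem_flowSubgroup b _ t) (AddSubgroup.mem_sup_right
        (EuclideanSpace.mem_span_int_basisFun.2 ⟨m, rfl⟩))⟩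
    rw [Metric.mem_ball, dist_eq_norm]
    refine lt_of_eq_of_lt (congrArg _ ?_) hm
    ext i
    simp only [PiLp.sub_apply, PiLp.smul_apply, smul_eq_mul, Pi.add_apply]
    ring
  · intro hd x ε hε
    obtain ⟨t, ht, v, hv, hlt⟩ := exists_pos_norm_smul_add_sub_lt b _ hd (WithLp.toLp 2 (x - c)) hε
    obtain ⟨m, rfl⟩ := EuclideanSpace.mem_span_int_basisFun.1 hv
    refine ⟨t, ht, -m, lt_of_eq_of_lt (congrArg _ ?_) hlt⟩
    ext i
    simp only [Pi.neg_apply, Int.cast_neg, sub_neg_eq_add, WithLp.toLp_sub, PiLp.sub_apply,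
      PiLp.add_apply, PiLp.smul_apply, smul_eq_mul]
    ring

/-- The orbit `{tΩ + c : t > 0}` is dense in `ℝ^g` modulo `ℤ^g` if and only if
`Ω₁, …, Ω_g` are rationally independent. -/
theorem orbit_dense_iff_rationally_independent
    (g : ℕ) (hg : 1 ≤ g) (Ω c : Fin g → ℝ) :
    (∀ x : Fin g → ℝ, ∀ ε : ℝ, 0 < ε → ∃ t : ℝ, 0 < t ∧ ∃ m : Fin g → ℤ,
        Real.sqrt (∑ i, (t * Ω i + c i - x i - (m i : ℝ)) ^ 2) < ε) ↔
      (∀ n : Fin g → ℤ, (∑ j, (n j : ℝ) * Ω j) = 0 → n = 0) :=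
  orbit_dense_iff_rationally_independent_general g Ω c
end

section
/- Let g ≥ 1, let Ω ∈ ℝ^g and c ∈ ℝ^g be arbitrary, and let H : ℝ^g → ℝ be continuous and ℤ^g-periodic, i.e., H(x + m) = H(x) for all x ∈ ℝ^g and m ∈ ℤ^g. Then the mean value lim_{T→+∞} (1/T) ∫_0^T H(tΩ + c) dt exists (i.e., the limit exists in ℝ). -/
/-!
Periodicity lets `H` descend to a continuous function on the torus `ℝᵍ/ℤᵍ`, along which
`t ↦ tΩ + c` becomes a linear flow. Along such a flow every Fourier monomial `x ↦ e(n·x)`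
is a constant times `t ↦ exp(2πi (n·Ω) t)`, whose time average converges (to `0` unless
`n·Ω = 0`, since its primitive is bounded). Time averages over `[0, T]` are `1`-Lipschitz
for the sup norm, so the observables whose time average converges form a closed subspace
of `C(ℝᵍ/ℤᵍ, ℂ)`; it contains the dense span of the monomials, hence everything.
-/

open Filter Topology MeasureTheory
open scoped NNReal

theorem isClosed_setOf_exists_tendsto_of_lipschitzWith {ι X α : Type*} [PseudoMetricSpace X]
    [PseudoMetricSpace α] [CompleteSpace α] {l : Filter ι} [l.NeBot] {F : ι → X → α} {K : ℝ≥0}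
    (hF : ∀ i, LipschitzWith K (F i)) :
    IsClosed {x | ∃ a, Tendsto (fun i => F i x) l (𝓝 a)} := by
  simp_rw [← cauchy_map_iff_exists_tendsto, cauchy_map_iff',
    Metric.uniformity_basis_dist.tendsto_right_iff]
  refine isClosed_of_closure_subset fun x hx ε hε => ?_
  obtain ⟨y, hy, hxy⟩ := Metric.mem_closure_iff.1 hx (ε / 3 / (K + 1)) (by positivity)
  have hclose : ∀ i, dist (F i x) (F i y) ≤ ε / 3 := fun i =>
    calc dist (F i x) (F i y) ≤ K * dist x y := (hF i).dist_le_mul x y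
      _ ≤ (K + 1) * (ε / 3 / (K + 1)) := by gcongr; linarith
      _ = ε / 3 := by field_simp
  filter_upwards [hy (ε / 3) (by positivity)] with p hp
  calc dist (F p.1 x) (F p.2 x)
      ≤ dist (F p.1 x) (F p.1 y) + dist (F p.1 y) (F p.2 y) + dist (F p.2 y) (F p.2 x) :=
        dist_triangle4 _ _ _ _
    _ < ε := by linarith [hclose p.1, hclose p.2, dist_comm (F p.2 y) (F p.2 x), hp]

section TimeAverage

variable {E : Type*} [NormedAddCommGroup E] [NormedSpace ℝ E]

noncomputable def timeAverage (f : ℝ → E) (T : ℝ) : E := (1 / T) • ∫ t in (0 : ℝ)..T, f t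

theorem norm_timeAverage_le {f : ℝ → E} {C : ℝ} (hf : ∀ t, ‖f t‖ ≤ C) (T : ℝ) :
    ‖timeAverage f T‖ ≤ C := by
  have hC : 0 ≤ C := (norm_nonneg _).trans (hf 0)
  rcases eq_or_ne T 0 with rfl | hT
  · simpa [timeAverage] using hC
  calc ‖timeAverage f T‖ = |T|⁻¹ * ‖∫ t in (0 : ℝ)..T, f t‖ := by
        rw [timeAverage, norm_smul, one_div, norm_inv, Real.norm_eq_abs]
    _ ≤ |T|⁻¹ * (C * |T - 0|) := by
        gcongr; exact intervalIntegral.norm_integral_le_of_norm_le_const fun t _ => hf t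
    _ = C := by rw [sub_zero]; field_simp

theorem timeAverage_add {f g : ℝ → E} (hf : Continuous f) (hg : Continuous g) (T : ℝ) :
    timeAverage (f + g) T = timeAverage f T + timeAverage g T := by
  simp only [timeAverage, Pi.add_apply,
    intervalIntegral.integral_add (hf.intervalIntegrable _ _) (hg.intervalIntegrable _ _),
    smul_add]

theorem timeAverage_sub {f g : ℝ → E} (hf : Continuous f) (hg : Continuous g) (T : ℝ) :
    timeAverage (f - g) T = timeAverage f T - timeAverage g T := by
  simp only [timeAverage, Pi.sub_apply,
    intervalIntegral.integral_sub (hf.intervalIntegrable _ _) (hg.intervalIntegrable _ _),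
    smul_sub]

theorem timeAverage_smul {𝕜 : Type*} [NontriviallyNormedField 𝕜] [NormedSpace 𝕜 E]
    [SMulCommClass ℝ 𝕜 E] (a : 𝕜) (f : ℝ → E) (T : ℝ) :
    timeAverage (a • f) T = a • timeAverage f T := by
  simp only [timeAverage, Pi.smul_apply, intervalIntegral.integral_smul, smul_comm (1 / T) a]

theorem timeAverage_const [CompleteSpace E] (a : E) {T : ℝ} (hT : T ≠ 0) :
    timeAverage (fun _ => a) T = a := by
  rw [timeAverage, intervalIntegral.integral_const, smul_smul, sub_zero, one_div,
    inv_mul_cancel₀ hT, one_smul]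

theorem timeAverage_ofReal (f : ℝ → ℝ) (T : ℝ) :
    timeAverage (fun t => (f t : ℂ)) T = timeAverage f T := by
  simp [timeAverage, intervalIntegral.integral_ofReal]

theorem tendsto_timeAverage_zero_of_norm_integral_le {f : ℝ → E} {C : ℝ}
    (hf : ∀ T, ‖∫ t in (0 : ℝ)..T, f t‖ ≤ C) : Tendsto (timeAverage f) atTop (𝓝 0) := by
  refine squeeze_zero_norm' ?_ (by simpa using tendsto_inv_atTop_zero.const_mul C)
  filter_upwards [eventually_gt_atTop 0] with T hT
  rw [timeAverage, norm_smul, one_div, norm_inv, Real.norm_of_nonneg hT.le, mul_comm]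
  gcongr
  exact hf T

end TimeAverage

open Complex in
theorem exists_tendsto_timeAverage_exp (a : ℝ) :
    ∃ L, Tendsto (timeAverage fun t : ℝ => exp (a * I * t)) atTop (𝓝 L) := by
  rcases eq_or_ne a 0 with rfl | ha
  · refine ⟨1, tendsto_const_nhds.congr' ?_⟩
    filter_upwards [eventually_ne_atTop 0] with T hT
    simpa using (timeAverage_const (1 : ℂ) hT).symm
  refine ⟨0, tendsto_timeAverage_zero_of_norm_integral_le (C := 2 / ‖(a : ℂ) * I‖) fun T => ?_⟩
  have haI : (a : ℂ) * I ≠ 0 := by simpa using ha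
  have hexp : ∀ t : ℝ, ‖exp (a * I * t)‖ = 1 := fun t => by
    rw [mul_right_comm, ← ofReal_mul]; exact norm_exp_ofReal_mul_I _
  rw [integral_exp_mul_complex haI, norm_div]
  gcongr
  calc ‖exp (a * I * T) - exp (a * I * (0 : ℝ))‖
      ≤ ‖exp (a * I * T)‖ + ‖exp (a * I * (0 : ℝ))‖ := norm_sub_le _ _
    _ = 2 := by rw [hexp, hexp]; norm_num

section ContinuousMap

variable {X E : Type*} [TopologicalSpace X] [NormedAddCommGroup E] [NormedSpace ℝ E]

theorem lipschitzWith_timeAverage_comp [CompactSpace X] (γ : C(ℝ, X)) (T : ℝ) :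
    LipschitzWith 1 fun F : C(X, E) => timeAverage (F ∘ γ) T := by
  refine LipschitzWith.of_dist_le_mul fun F G => ?_
  rw [dist_eq_norm, dist_eq_norm, NNReal.coe_one, one_mul,
    ← timeAverage_sub (F.continuous.comp γ.continuous) (G.continuous.comp γ.continuous)]
  exact norm_timeAverage_le (fun t => (F - G).norm_coe_le_norm (γ t)) T

variable (𝕜 : Type*) [NontriviallyNormedField 𝕜] [NormedSpace 𝕜 E] [SMulCommClass ℝ 𝕜 E]

def timeAverageSubmodule (γ : C(ℝ, X)) : Submodule 𝕜 C(X, E) where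
  carrier := {F | ∃ L, Tendsto (timeAverage (F ∘ γ)) atTop (𝓝 L)}
  zero_mem' := ⟨0, tendsto_const_nhds.congr fun T => by simp [timeAverage]⟩
  add_mem' := by
    rintro F G ⟨L, hL⟩ ⟨M, hM⟩
    refine ⟨L + M, (hL.add hM).congr fun T => ?_⟩
    exact (timeAverage_add (F.continuous.comp γ.continuous)
      (G.continuous.comp γ.continuous) T).symm
  smul_mem' := by
    rintro a F ⟨L, hL⟩
    exact ⟨a • L, (hL.const_smul a).congr fun T => (timeAverage_smul a (F ∘ γ) T).symm⟩

theorem isClosed_timeAverageSubmodule [CompactSpace X] [CompleteSpace E] (γ : C(ℝ, X)) :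
    IsClosed ((timeAverageSubmodule 𝕜 γ : Submodule 𝕜 C(X, E)) : Set C(X, E)) :=
  isClosed_setOf_exists_tendsto_of_lipschitzWith (lipschitzWith_timeAverage_comp γ)

end ContinuousMap

namespace UnitAddTorus

open Complex

theorem exists_continuousMap_comp_coe_eq {d E : Type*} [TopologicalSpace E] {H : (d → ℝ) → E}
    (hH : Continuous H) (hper : ∀ (x : d → ℝ) (m : d → ℤ), H (x + fun i => (m i : ℝ)) = H x) :
    ∃ H' : C(UnitAddTorus d, E), ∀ x : d → ℝ, H' (fun i => x i) = H x := by
  let q : C(d → ℝ, UnitAddTorus d) := ⟨fun x i => x i, by fun_prop⟩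
  have hq : Topology.IsQuotientMap q :=
    (IsOpenQuotientMap.piMap fun _ => QuotientAddGroup.isOpenQuotientMap_mk).isQuotientMap
  have hfac : Function.FactorsThrough H q := fun x y hxy => by
    have hdiff : ∀ i, ∃ m : ℤ, m • (1 : ℝ) = y i - x i := fun i =>
      AddSubgroup.mem_zmultiples_iff.1 (QuotientAddGroup.eq_iff_sub_mem.1 (congrFun hxy i).symm)
    choose m hm using hdiff
    have hy : y = x + fun i => (m i : ℝ) := by
      ext i; have := hm i; simp only [zsmul_eq_mul, mul_one] at this; simp [this]
    simp [hy, hper]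
  exact ⟨hq.lift ⟨H, hH⟩ hfac, DFunLike.congr_fun (hq.lift_comp ⟨H, hH⟩ hfac)⟩

variable {d : Type*} [Fintype d]

def linearFlow (Ω c : d → ℝ) : C(ℝ, UnitAddTorus d) :=
  ⟨fun t i => ((t * Ω i + c i : ℝ) : UnitAddCircle), by fun_prop⟩

theorem mFourier_linearFlow (n : d → ℤ) (Ω c : d → ℝ) (t : ℝ) :
    mFourier n (linearFlow Ω c t) =
      exp ((2 * Real.pi * ∑ i, n i * c i : ℝ) * I) *
        exp ((2 * Real.pi * ∑ i, n i * Ω i : ℝ) * I * t) := by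
  simp only [mFourier, linearFlow, ContinuousMap.coe_mk, fourier_coe_apply, ← exp_sum, ← exp_add]
  congr 1
  push_cast
  simp only [Finset.mul_sum, Finset.sum_mul, div_one, ← Finset.sum_add_distrib]
  exact Finset.sum_congr rfl fun i _ => by ring

theorem mFourier_mem_timeAverageSubmodule (n : d → ℤ) (Ω c : d → ℝ) :
    mFourier n ∈ timeAverageSubmodule ℂ (linearFlow Ω c) := by
  obtain ⟨L, hL⟩ := exists_tendsto_timeAverage_exp (2 * Real.pi * ∑ i, n i * Ω i)
  refine ⟨exp ((2 * Real.pi * ∑ i, n i * c i : ℝ) * I) • L, (hL.const_smul _).congr fun T => ?_⟩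
  rw [← timeAverage_smul]
  congr 1
  ext t
  simp [mFourier_linearFlow]

theorem timeAverageSubmodule_linearFlow_eq_top (Ω c : d → ℝ) :
    timeAverageSubmodule ℂ (linearFlow Ω c) = (⊤ : Submodule ℂ C(UnitAddTorus d, ℂ)) := by
  rw [eq_top_iff, ← span_mFourier_closure_eq_top]
  refine Submodule.topologicalClosure_minimal _ ?_ (isClosed_timeAverageSubmodule ℂ _)
  exact Submodule.span_le.2 <|
    Set.range_subset_iff.2 fun n => mFourier_mem_timeAverageSubmodule n Ω c

end UnitAddTorus

theorem mean_value_exists_general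
    (g : ℕ) (Ω c : Fin g → ℝ)
    (H : (Fin g → ℝ) → ℝ) (hH : Continuous H)
    (hper : ∀ (x : Fin g → ℝ) (m : Fin g → ℤ), H (x + fun i => (m i : ℝ)) = H x) :
    ∃ L : ℝ, Filter.Tendsto (fun T : ℝ => (1 / T) * ∫ t in (0:ℝ)..T, H (t • Ω + c))
      Filter.atTop (nhds L) := by
  obtain ⟨H', hH'⟩ := UnitAddTorus.exists_continuousMap_comp_coe_eq hH hper
  have hmean : (Complex.ofRealCLM : C(ℝ, ℂ)).comp H' ∈
      timeAverageSubmodule ℂ (UnitAddTorus.linearFlow Ω c) := by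
    rw [UnitAddTorus.timeAverageSubmodule_linearFlow_eq_top]; exact Submodule.mem_top
  obtain ⟨L, hL⟩ := hmean
  have hflow : ∀ t : ℝ, H' (UnitAddTorus.linearFlow Ω c t) = H (t • Ω + c) := fun t => hH' _
  refine ⟨L.re, ((Complex.continuous_re.tendsto L).comp hL).congr fun T => ?_⟩
  simp only [Function.comp_def, ContinuousMap.comp_apply, ContinuousMap.coe_coe,
    Complex.ofRealCLM_apply, hflow, timeAverage_ofReal, Complex.ofReal_re]
  rfl

/-- For any `Ω, c ∈ ℝ^g` and any continuous `ℤ^g`-periodic function `H : ℝ^g → ℝ`,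
the mean value `lim_{T→+∞} (1/T)∫_0^T H(tΩ + c) dt` exists. -/
theorem mean_value_exists
    (g : ℕ) (hg : 1 ≤ g) (Ω c : Fin g → ℝ)
    (H : (Fin g → ℝ) → ℝ) (hH : Continuous H)
    (hper : ∀ (x : Fin g → ℝ) (m : Fin g → ℤ), H (x + fun i => (m i : ℝ)) = H x) :
    ∃ L : ℝ, Filter.Tendsto (fun T : ℝ => (1 / T) * ∫ t in (0:ℝ)..T, H (t • Ω + c))
      Filter.atTop (nhds L) :=
  mean_value_exists_general g Ω c H hH hper
end
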